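/- arXiv:2005.06277 — 10 statements merged into one kernel-verified Lean document; each statement's English description precedes it below -/
import Mathlib

section
/- Let D be a convex subset of ℝⁿ. If X is a random vector (on some probability space) taking values in ℝⁿ such that X is integrable and Pr{X ∈ D} = 1, then the expectation E[X] belongs to D. -/
/-!
If `m := E[X]` were not in `D`, it would not be in the interior of `D`, so some nonzero linear
functional `f` is maximised over `D` at `m`. Since `E[f X] = f m` and `f X ≤ f m` almost surely,
`f X = f m` almost surely: `X - m` lies almost surely in the hyperplane `ker f`. Projecting onto
`ker f` and translating by `m` gives the same situation in one dimension less, so induction on the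
dimension shows `m ∈ D` after all.
-/

open MeasureTheory

section

variable {E : Type*} [NormedAddCommGroup E] [NormedSpace ℝ E]
  {Ω : Type*} [MeasurableSpace Ω] {μ : Measure Ω} [IsProbabilityMeasure μ]

/-- Supporting hyperplane theorem, in finite dimensions. -/
theorem Convex.exists_ne_zero_forall_le_of_notMem_interior [FiniteDimensional ℝ E] {D : Set E}
    (hD : Convex ℝ D) (hne : D.Nonempty) {m : E} (hm : m ∉ interior D) :
    ∃ f : StrongDual ℝ E, f ≠ 0 ∧ ∀ x ∈ D, f x ≤ f m := by
  by_cases hint : (interior D).Nonempty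
  · exact geometric_hahn_banach_of_nonempty_interior_point hD hm hint
  obtain ⟨x₀, hx₀⟩ := hne
  have hdir : (affineSpan ℝ D).direction < ⊤ := by
    refine lt_top_iff_ne_top.mpr fun h => hint ?_
    rw [hD.interior_nonempty_iff_affineSpan_eq_top]
    exact (AffineSubspace.direction_eq_top_iff_of_nonempty ⟨x₀, subset_affineSpan ℝ D hx₀⟩).mp h
  obtain ⟨g, hg0, hker⟩ := (affineSpan ℝ D).direction.exists_le_ker_of_lt_top hdir
  set f : StrongDual ℝ E := LinearMap.toContinuousLinearMap g
  have hf0 : f ≠ 0 := fun h => hg0 ((LinearEquiv.map_eq_zero_iff _).mp h)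
  have hconst : ∀ x ∈ D, f x = f x₀ := fun x hx => by
    have := hker (AffineSubspace.vsub_mem_direction (subset_affineSpan ℝ D hx)
      (subset_affineSpan ℝ D hx₀))
    simpa [f, sub_eq_zero] using this
  rcases le_total (f x₀) (f m) with h | h
  · exact ⟨f, hf0, fun x hx => (hconst x hx).trans_le h⟩
  · exact ⟨-f, neg_ne_zero.mpr hf0, fun x hx => by simp [hconst x hx, h]⟩

theorem ae_mem_of_subset_of_measure_eq_one {s t : Set Ω} (ht : NullMeasurableSet t μ)
    (hst : s ⊆ t) (hs : μ s = 1) : ∀ᵐ ω ∂μ, ω ∈ t :=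
  (prob_compl_eq_zero_iff₀ ht).mpr (le_antisymm prob_le_one (hs ▸ measure_mono hst))

theorem ae_eq_integral_of_ae_le_integral {g : Ω → ℝ} (hg : Integrable g μ)
    (hle : ∀ᵐ ω ∂μ, g ω ≤ ∫ ω, g ω ∂μ) : ∀ᵐ ω ∂μ, g ω = ∫ ω, g ω ∂μ :=
  (integral_eq_iff_of_ae_le hg (integrable_const _) hle).mp (by simp)

theorem ae_apply_eq_apply_integral_of_forall_le [CompleteSpace E] {D : Set E} {X : Ω → E}
    (hXi : Integrable X μ) (hXD : μ {ω | X ω ∈ D} = 1) {f : StrongDual ℝ E}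
    (hfD : ∀ x ∈ D, f x ≤ f (∫ ω, X ω ∂μ)) :
    ∀ᵐ ω ∂μ, f (X ω) = f (∫ ω, X ω ∂μ) := by
  have hint : ∫ ω, f (X ω) ∂μ = f (∫ ω, X ω ∂μ) := f.integral_comp_comm hXi
  have hfi : Integrable (fun ω => f (X ω)) μ := f.integrable_comp hXi
  have hle : ∀ᵐ ω ∂μ, f (X ω) ≤ f (∫ ω, X ω ∂μ) :=
    ae_mem_of_subset_of_measure_eq_one (t := {ω | f (X ω) ≤ f (∫ ω, X ω ∂μ)})
      (nullMeasurableSet_le hfi.aemeasurable aemeasurable_const) (fun ω hω => hfD _ hω) hXD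
  simpa only [hint] using ae_eq_integral_of_ae_le_integral hfi (by simpa only [hint] using hle)

theorem Convex.integral_mem_of_measure_eq_one [FiniteDimensional ℝ E] {D : Set E}
    (hD : Convex ℝ D) {X : Ω → E} (hXi : Integrable X μ) (hXD : μ {ω | X ω ∈ D} = 1) :
    ∫ ω, X ω ∂μ ∈ D := by
  induction h : Module.finrank ℝ E using Nat.strong_induction_on generalizing E with
  | _ N ih =>
    subst h
    set m := ∫ ω, X ω ∂μ
    by_contra hmD
    have hne : D.Nonempty := by
      obtain ⟨ω, hω⟩ := nonempty_of_measure_ne_zero (hXD.symm ▸ one_ne_zero : μ {ω | X ω ∈ D} ≠ 0)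
      exact ⟨X ω, hω⟩
    obtain ⟨f, hf0, hfD⟩ :=
      hD.exists_ne_zero_forall_le_of_notMem_interior hne fun h => hmD (interior_subset h)
    have hfX := ae_apply_eq_apply_integral_of_forall_le hXi hXD hfD
    set K := LinearMap.ker (f : E →ₗ[ℝ] ℝ)
    have hK : Module.finrank ℝ K < Module.finrank ℝ E := Submodule.finrank_lt fun h =>
      hf0 (ContinuousLinearMap.coe_injective (LinearMap.ker_eq_top.mp h))
    obtain ⟨P, hP⟩ := f.ker_closedComplemented_of_finiteDimensional_range
    have hXm : Integrable (fun ω => X ω - m) μ := hXi.sub (integrable_const m)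
    have hY : (fun ω => ((P (X ω - m) : K) : E) + m) =ᵐ[μ] X := by
      filter_upwards [hfX] with ω hω
      have hmem : X ω - m ∈ K := by simpa [K, sub_eq_zero] using hω
      simp [hP ⟨_, hmem⟩]
    have hY0 : ∫ ω, P (X ω - m) ∂μ = 0 := by
      rw [P.integral_comp_comm hXm, integral_sub hXi (integrable_const m),
        integral_const, probReal_univ, one_smul, sub_self, map_zero]
    have hmean := ih _ hK (hD.translate_preimage_left m |>.linear_preimage K.subtype)
      (P.integrable_comp hXm) ((measure_congr (hY.fun_comp (· ∈ D))).trans hXD) rfl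
    rw [hY0] at hmean
    exact hmD (by simpa using hmean)

end

theorem statement0_general {n : ℕ} {Ω : Type*} [MeasurableSpace Ω] (μ : Measure Ω)
    [IsProbabilityMeasure μ] (D : Set (EuclideanSpace ℝ (Fin n))) (hD : Convex ℝ D)
    (X : Ω → EuclideanSpace ℝ (Fin n)) (hXi : Integrable X μ)
    (hXD : μ {ω | X ω ∈ D} = 1) :
    (∫ ω, X ω ∂μ) ∈ D :=
  hD.integral_mem_of_measure_eq_one hXi hXD

/-- If `D` is a convex subset of `ℝⁿ` and `X` is an integrable random vector with
`Pr{X ∈ D} = 1`, then `E[X] ∈ D`. -/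
theorem statement0 {n : ℕ} {Ω : Type*} [MeasurableSpace Ω] (μ : Measure Ω)
    [IsProbabilityMeasure μ] (D : Set (EuclideanSpace ℝ (Fin n))) (hD : Convex ℝ D)
    (X : Ω → EuclideanSpace ℝ (Fin n)) (hXm : Measurable X) (hXi : Integrable X μ)
    (hXD : μ {ω | X ω ∈ D} = 1) :
    (∫ ω, X ω ∂μ) ∈ D :=
  statement0_general μ D hD X hXi hXD
end

section
/- Let 𝒜 ⊆ ℝ^d, ℬ ⊆ ℝ^k, let f : ℝ^d → ℝ^k and g : ℝ^d → ℝ be measurable. Let 𝒳 be the family of all random vectors X in ℝ^d such that Pr{X ∈ 𝒜} = 1, f(X) is integrable with E[f(X)] ∈ ℬ, and g(X) is integrable. Then sup_{X ∈ 𝒳} E[g(X)] = sup_{Y ∈ 𝒴} E[g(Y)], where 𝒴 is the subfamily of 𝒳 consisting of discrete random vectors with at most k+1 distinct possible values. -/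
/-!
Write `Y = (f X, g X)`, a random vector in `ℝᵏ × ℝ` almost surely in `Φ = (f, g) '' 𝒜`.

Its mean `m` lies in the convex hull of `Φ`. Either every nonzero functional exceeds its value
at `m` somewhere on `Φ`, and then (by compactness of the unit sphere of the dual) already on a
finite subset of `Φ`, whose hull is closed and therefore contains `m` by Hahn–Banach; or some
nonzero `φ` satisfies `φ ≤ φ m` on `Φ`, so `φ ∘ Y = φ m` a.s. and `Y` lives in a hyperplane
through `m`, which lowers the dimension.

Above `m` the hull of a finite subset of `Φ` has a highest point. It lies on the boundary of
that hull, so the Carathéodory simplex containing it is not full-dimensional: it is a convex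
combination of at most `k + 1` points of `Φ`, a discrete random vector with the same
`E[f]` and a larger `E[g]`.
-/

open MeasureTheory Set

theorem Function.Injective.sum_extend_zero {α β M : Type*} [Fintype α] [Fintype β]
    [AddCommMonoid M] {e : α → β} (he : Injective e) (h : α → M) :
    ∑ b, Function.extend e h 0 b = ∑ a, h a := by
  classical
  rw [← Finset.sum_subset (Finset.subset_univ (Finset.univ.map ⟨e, he⟩)), Finset.sum_map]
  · simp [he.extend_apply]
  · intro b _ hb
    refine Function.extend_apply' _ _ _ fun ⟨a, ha⟩ ↦ hb ?_
    simp [← ha]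

theorem exists_fin_convexCombination_of_card_le {F : Type*} [AddCommGroup F] [Module ℝ F]
    {ι : Type*} [Fintype ι] {n : ℕ} (hn : Fintype.card ι ≤ n) {w : ι → ℝ} (hw : ∀ i, 0 ≤ w i)
    (hw₁ : ∑ i, w i = 1) (z : ι → F) :
    ∃ (θ : Fin n → ℝ) (y : Fin n → F), (∀ ℓ, 0 ≤ θ ℓ) ∧ (∀ ℓ, y ℓ ∈ range z) ∧
      ∑ ℓ, θ ℓ = 1 ∧ ∑ ℓ, θ ℓ • y ℓ = ∑ i, w i • z i := by
  obtain ⟨i₀⟩ : Nonempty ι := by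
    by_contra hι
    simp [not_nonempty_iff.mp hι] at hw₁
  obtain ⟨e⟩ : Nonempty (ι ↪ Fin n) := Function.Embedding.nonempty_of_card_le (by simpa using hn)
  have hsmul : (fun ℓ ↦ Function.extend e w 0 ℓ • Function.extend e z (fun _ ↦ z i₀) ℓ) =
      Function.extend e (fun i ↦ w i • z i) 0 := by
    ext ℓ
    obtain ⟨i, rfl⟩ | hℓ := em (∃ i, e i = ℓ) <;>
      simp [e.injective.extend_apply, Function.extend_apply', *]
  refine ⟨Function.extend e w 0, Function.extend e z fun _ ↦ z i₀,
    fun ℓ ↦ ?_, fun ℓ ↦ ?_, ?_, ?_⟩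
  · obtain ⟨i, rfl⟩ | hℓ := em (∃ i, e i = ℓ) <;>
      simp [e.injective.extend_apply, Function.extend_apply', *]
  · obtain ⟨i, rfl⟩ | hℓ := em (∃ i, e i = ℓ) <;>
      simp [e.injective.extend_apply, Function.extend_apply', *]
  · rw [e.injective.sum_extend_zero, hw₁]
  · rw [hsmul, e.injective.sum_extend_zero]

section FiniteDimensional

variable {E : Type*} [NormedAddCommGroup E] [NormedSpace ℝ E] [FiniteDimensional ℝ E]

theorem mem_convexHull_of_forall_exists_lt {S : Set E} (hS : S.Nonempty) {m : E}
    (h : ∀ φ : StrongDual ℝ E, φ ≠ 0 → ∃ s ∈ S, φ m < φ s) : m ∈ convexHull ℝ S := by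
  obtain ⟨s₀, hs₀⟩ := hS
  have hcover : Metric.sphere (0 : StrongDual ℝ E) 1 ⊆ ⋃ s ∈ S, {φ | φ m < φ s} := fun φ hφ ↦
    have ⟨s, hs, hlt⟩ := h φ (ne_zero_of_mem_unit_sphere ⟨φ, hφ⟩)
    mem_biUnion hs hlt
  obtain ⟨T, hTS, hT, hTcover⟩ :=
    (isCompact_sphere (0 : StrongDual ℝ E) 1).elim_finite_subcover_image
      (fun s _ ↦ isOpen_lt (continuous_eval_const m) (continuous_eval_const s)) hcover
  refine convexHull_mono (insert_subset hs₀ hTS) ?_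
  by_contra hm
  obtain ⟨φ, u, hφT, hφm⟩ := geometric_hahn_banach_closed_point (convex_convexHull ℝ _)
    ((hT.insert s₀).isCompact_convexHull ℝ).isClosed hm
  have hφ : φ ≠ 0 := by
    rintro rfl
    have := hφT s₀ (subset_convexHull ℝ _ (mem_insert _ _))
    simp only [zero_apply] at this hφm
    linarith
  have hψ : ‖φ‖⁻¹ • φ ∈ Metric.sphere (0 : StrongDual ℝ E) 1 := by
    simp [norm_smul, hφ]
  obtain ⟨s, hsT, hs⟩ := mem_iUnion₂.mp (hTcover hψ)
  have hφs := hφT s (subset_convexHull ℝ _ (mem_insert_of_mem _ hsT))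
  have : φ m < φ s := by
    simpa [mul_lt_mul_iff_right₀ (inv_pos.mpr (norm_pos_iff.mpr hφ))] using hs
  linarith

theorem AffineIndependent.card_le_finrank_of_notMem_interior {ι : Type*} [Fintype ι]
    {z : ι → E} (hz : AffineIndependent ℝ z) {w : ι → ℝ} (hw : ∀ i, 0 < w i)
    (hw₁ : ∑ i, w i = 1) (hx : ∑ i, w i • z i ∉ interior (convexHull ℝ (range z))) :
    Fintype.card ι ≤ Module.finrank ℝ E := by
  by_contra! hcard
  have htop : affineSpan ℝ (range z) = ⊤ :=
    hz.affineSpan_eq_top_iff_card_eq_finrank_add_one.mpr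
      (le_antisymm (hz.card_le_finrank_succ.trans (by grw [Submodule.finrank_le])) hcard)
  let b : AffineBasis ι ℝ E := ⟨z, hz, htop⟩
  apply hx
  rw [show range z = range b from rfl, b.interior_convexHull]
  intro i
  have := b.coord_apply_combination_of_mem (Finset.mem_univ i) hw₁
  rw [Finset.univ.affineCombination_eq_linear_combination _ _ hw₁] at this
  exact this ▸ hw i

theorem exists_fin_convexCombination_of_notMem_interior {s : Set E} {x : E}
    (hx : x ∈ convexHull ℝ s) (hxi : x ∉ interior (convexHull ℝ s)) {n : ℕ}
    (hn : Module.finrank ℝ E ≤ n) :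
    ∃ (θ : Fin n → ℝ) (y : Fin n → E), (∀ ℓ, 0 ≤ θ ℓ) ∧ (∀ ℓ, y ℓ ∈ s) ∧
      ∑ ℓ, θ ℓ = 1 ∧ ∑ ℓ, θ ℓ • y ℓ = x := by
  obtain ⟨ι, _, z, w, hzs, hz, hw, hw₁, rfl⟩ := eq_pos_convex_span_of_mem_convexHull hx
  have hcard := hz.card_le_finrank_of_notMem_interior hw hw₁
    fun h ↦ hxi (interior_mono (convexHull_mono hzs) h)
  obtain ⟨θ, y, hθ, hy, hθ₁, hθy⟩ :=
    exists_fin_convexCombination_of_card_le (hcard.trans hn) (fun i ↦ (hw i).le) hw₁ z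
  exact ⟨θ, y, hθ, fun ℓ ↦ hzs (hy ℓ), hθ₁, hθy⟩

theorem exists_fin_convexCombination_fst_eq_le_snd {α : Type*} {A : Set α} {u : α → E}
    {v : α → ℝ} {n : ℕ} (hn : Module.finrank ℝ E + 1 ≤ n) {p : E × ℝ}
    (hp : p ∈ convexHull ℝ ((fun a ↦ (u a, v a)) '' A)) :
    ∃ (θ : Fin n → ℝ) (y : Fin n → α), (∀ ℓ, 0 ≤ θ ℓ) ∧ (∀ ℓ, y ℓ ∈ A) ∧ ∑ ℓ, θ ℓ = 1 ∧
      ∑ ℓ, θ ℓ • u (y ℓ) = p.1 ∧ p.2 ≤ ∑ ℓ, θ ℓ * v (y ℓ) := by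
  obtain ⟨t, htA, hpt⟩ : ∃ t : Finset (E × ℝ), ↑t ⊆ (fun a ↦ (u a, v a)) '' A ∧
      p ∈ convexHull ℝ (t : Set (E × ℝ)) := by
    rw [convexHull_eq_union_convexHull_finite_subsets] at hp
    simpa using hp
  set K := convexHull ℝ (t : Set (E × ℝ)) ∩ {q | q.1 = p.1}
  have hK : IsCompact K := (t.finite_toSet.isCompact_convexHull ℝ).inter_right
    (isClosed_eq continuous_fst continuous_const)
  obtain ⟨p', ⟨hp't, hp'₁⟩, hmax⟩ :=
    hK.exists_isMaxOn ⟨p, hpt, rfl⟩ continuous_snd.continuousOn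
  have hp'i : p' ∉ interior (convexHull ℝ (t : Set (E × ℝ))) := by
    intro hint
    obtain ⟨ε, hε, hball⟩ := Metric.mem_nhds_iff.mp (mem_interior_iff_mem_nhds.mp hint)
    have hup : p' + (0, ε / 2) ∈ K := by
      refine ⟨hball ?_, by simpa using hp'₁⟩
      simp [abs_of_pos hε, hε]
    have := hmax hup
    simp only [mem_ofPred_eq, Prod.snd_add] at this
    linarith
  obtain ⟨θ, q, hθ, hq, hθ₁, hθq⟩ := exists_fin_convexCombination_of_notMem_interior hp't hp'i
    (by simpa [Module.finrank_prod] using hn)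
  choose y hyA hyq using fun ℓ ↦ htA (hq ℓ)
  have hsum : ∑ ℓ, θ ℓ • q ℓ = (∑ ℓ, θ ℓ • u (y ℓ), ∑ ℓ, θ ℓ * v (y ℓ)) := by
    ext <;> simp [← hyq, Prod.fst_sum, Prod.snd_sum]
  refine ⟨θ, y, hθ, hyA, hθ₁, ?_, ?_⟩
  · rw [← hp'₁, ← hθq, hsum]
  · simpa [← hθq, hsum] using hmax ⟨hpt, rfl⟩

end FiniteDimensional

section Expectation

variable {Ω : Type*} [MeasurableSpace Ω] {μ : Measure Ω} [IsProbabilityMeasure μ]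

theorem ae_apply_eq_apply_integral_of_forall_le_s2 {E : Type*} [NormedAddCommGroup E]
    [NormedSpace ℝ E] [CompleteSpace E] {Y : Ω → E} (hY : Integrable Y μ) {S : Set E}
    (hS : μ (Y ⁻¹' S) = 1) {φ : StrongDual ℝ E} (hφS : ∀ s ∈ S, φ s ≤ φ (∫ ω, Y ω ∂μ)) :
    ∀ᵐ ω ∂μ, φ (Y ω) = φ (∫ ω, Y ω ∂μ) := by
  have hφY : Integrable (fun ω ↦ φ (Y ω)) μ := φ.integrable_comp hY
  have hle : ∀ᵐ ω ∂μ, φ (Y ω) ≤ φ (∫ ω, Y ω ∂μ) := by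
    have hmeas : NullMeasurableSet {ω | φ (Y ω) ≤ φ (∫ ω, Y ω ∂μ)} μ :=
      nullMeasurableSet_le hφY.aemeasurable aemeasurable_const
    exact (mem_ae_iff_prob_eq_one₀ hmeas).mpr
      (le_antisymm prob_le_one (hS ▸ measure_mono fun ω hω ↦ hφS _ hω))
  exact (integral_eq_iff_of_ae_le hφY (integrable_const _) hle).mp
    (by rw [φ.integral_comp_comm hY, integral_const, probReal_univ, one_smul])

theorem integral_mem_convexHull {E : Type*} [NormedAddCommGroup E] [NormedSpace ℝ E]
    [FiniteDimensional ℝ E] {Y : Ω → E} (hY : Integrable Y μ) {S : Set E}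
    (hS : μ (Y ⁻¹' S) = 1) : ∫ ω, Y ω ∂μ ∈ convexHull ℝ S := by
  induction h : Module.finrank ℝ E using Nat.strong_induction_on generalizing E with
  | _ n IH =>
  set m := ∫ ω, Y ω ∂μ
  have hSne : S.Nonempty :=
    (nonempty_of_measure_ne_zero (hS ▸ one_ne_zero : μ (Y ⁻¹' S) ≠ 0)).image Y |>.mono
      (image_preimage_subset Y S)
  by_cases hsep : ∀ φ : StrongDual ℝ E, φ ≠ 0 → ∃ s ∈ S, φ m < φ s
  · exact mem_convexHull_of_forall_exists_lt hSne hsep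
  push Not at hsep
  obtain ⟨φ, hφ, hφS⟩ := hsep
  have hker : ∀ᵐ ω ∂μ, Y ω - m ∈ LinearMap.ker (φ : E →ₗ[ℝ] ℝ) := by
    filter_upwards [ae_apply_eq_apply_integral_of_forall_le_s2 hY hS hφS] with ω hω
    simp [hω, m]
  have hW : Module.finrank ℝ (LinearMap.ker (φ : E →ₗ[ℝ] ℝ)) < n := by
    have := Module.Dual.finrank_ker_add_one_of_ne_zero (ContinuousLinearMap.coe_injective.ne hφ)
    omega
  set W := LinearMap.ker (φ : E →ₗ[ℝ] ℝ)
  obtain ⟨P, hP⟩ := Submodule.ClosedComplemented.of_finiteDimensional W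
  -- `Z` is `Y - m` read in `W`, which it equals off a null set
  set Z : Ω → W := fun ω ↦ P (Y ω - m)
  have hYm : Integrable (fun ω ↦ Y ω - m) μ := hY.sub (integrable_const m)
  have hZ : Integrable Z μ := P.integrable_comp hYm
  have hZ0 : ∫ ω, Z ω ∂μ = 0 := by
    rw [P.integral_comp_comm hYm, integral_sub hY (integrable_const m)]
    simp [m]
  set S₁ : Set W := {w | (w : E) + m ∈ S}
  have hZS : μ (Z ⁻¹' S₁) = 1 := by
    refine le_antisymm prob_le_one ?_
    calc 1 = μ (Y ⁻¹' S ∩ {ω | Y ω - m ∈ W}) := by rw [measure_inter_conull hker, hS]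
      _ ≤ μ (Z ⁻¹' S₁) := measure_mono fun ω ⟨hωS, hωW⟩ ↦ by
        have hZω : Z ω = ⟨Y ω - m, hωW⟩ := hP ⟨_, hωW⟩
        simpa [S₁, hZω] using hωS
  have h0 : (0 : W) ∈ convexHull ℝ S₁ := hZ0 ▸ IH _ hW hZ hZS rfl
  have hconv : Convex ℝ {w : W | (w : E) + m ∈ convexHull ℝ S} :=
    ((convex_convexHull ℝ S).translate_preimage_left m).linear_preimage W.subtype
  simpa using convexHull_min (t := {w : W | (w : E) + m ∈ convexHull ℝ S})
    (fun w hw ↦ subset_convexHull ℝ S hw) hconv h0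

end Expectation

section Discrete

variable {ι : Type*} [Fintype ι] [MeasurableSpace ι] {θ : ι → ℝ}

theorem isProbabilityMeasure_sum_smul_dirac (hθ : ∀ i, 0 ≤ θ i) (hθ₁ : ∑ i, θ i = 1) :
    IsProbabilityMeasure (∑ i, ENNReal.ofReal (θ i) • Measure.dirac i) := by
  constructor
  simp [← ENNReal.ofReal_sum_of_nonneg fun i _ ↦ hθ i, hθ₁]

theorem integral_sum_smul_dirac [MeasurableSingletonClass ι] {G : Type*} [NormedAddCommGroup G]
    [NormedSpace ℝ G] [CompleteSpace G] (hθ : ∀ i, 0 ≤ θ i) (h : ι → G) :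
    ∫ i, h i ∂(∑ i, ENNReal.ofReal (θ i) • Measure.dirac i) = ∑ i, θ i • h i := by
  rw [integral_finsetSum_measure fun i _ ↦
    Integrable.of_finite.smul_measure ENNReal.ofReal_ne_top]
  simp [integral_smul_measure, ENNReal.toReal_ofReal (hθ _)]

end Discrete

theorem statement2_general {d k : ℕ}
    (A : Set (Fin d → ℝ)) (B : Set (Fin k → ℝ))
    (f : (Fin d → ℝ) → (Fin k → ℝ)) (g : (Fin d → ℝ) → ℝ) :
    sSup { v : ℝ | ∃ (Ω : Type) (_ : MeasurableSpace Ω) (μ : Measure Ω),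
        IsProbabilityMeasure μ ∧ ∃ X : Ω → (Fin d → ℝ), Measurable X ∧
        μ {ω | X ω ∈ A} = 1 ∧ Integrable (fun ω => f (X ω)) μ ∧
        (∫ ω, f (X ω) ∂μ) ∈ B ∧ Integrable (fun ω => g (X ω)) μ ∧
        v = ∫ ω, g (X ω) ∂μ }
    = sSup { v : ℝ |
      ∃ (θ : Fin (k + 1) → ℝ) (y : Fin (k + 1) → (Fin d → ℝ)),
        (∀ ℓ, 0 ≤ θ ℓ) ∧ (∀ ℓ, y ℓ ∈ A) ∧ (∑ ℓ, θ ℓ) = 1 ∧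
        (∑ ℓ, θ ℓ • f (y ℓ)) ∈ B ∧ v = ∑ ℓ, θ ℓ * g (y ℓ) } := by
  -- mutual domination also matches the junk values of `sSup` (empty or unbounded sets)
  apply csSup_eq_csSup_of_forall_exists_le
  · rintro _ ⟨Ω, _, μ, _, X, -, hXA, hfX, hfB, hgX, rfl⟩
    have hmem := integral_mem_convexHull (hfX.prodMk hgX)
      (S := (fun x ↦ (f x, g x)) '' A)
      (le_antisymm prob_le_one (hXA ▸ measure_mono fun ω hω ↦ ⟨X ω, hω, rfl⟩))
    rw [integral_pair hfX hgX] at hmem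
    obtain ⟨θ, y, hθ, hyA, hθ₁, hfy, hgy⟩ :=
      exists_fin_convexCombination_fst_eq_le_snd (n := k + 1) (by simp) hmem
    exact ⟨_, ⟨θ, y, hθ, hyA, hθ₁, hfy ▸ hfB, rfl⟩, hgy⟩
  · rintro _ ⟨θ, y, hθ, hyA, hθ₁, hfB, rfl⟩
    have := isProbabilityMeasure_sum_smul_dirac hθ hθ₁
    refine ⟨_, ⟨Fin (k + 1), _, _, this, y,
      measurable_of_finite y, ?_, .of_finite, ?_, .of_finite, rfl⟩, ?_⟩
    · rw [show {ℓ | y ℓ ∈ A} = univ from eq_univ_of_forall hyA, measure_univ]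
    · rwa [integral_sum_smul_dirac hθ]
    · simp [integral_sum_smul_dirac hθ]

/-- The supremum of `E[g(X)]` over all random vectors `X` with `Pr{X ∈ A} = 1` and
`E[f(X)] ∈ B` equals the supremum over discrete random vectors with at most `k+1`
distinct possible values, i.e. over convex combinations of at most `k+1` points of `A`
whose `f`-barycenter lies in `B`. -/
theorem statement2 {d k : ℕ}
    (A : Set (Fin d → ℝ)) (B : Set (Fin k → ℝ))
    (f : (Fin d → ℝ) → (Fin k → ℝ)) (g : (Fin d → ℝ) → ℝ)
    (hf : Measurable f) (hg : Measurable g) :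
    sSup { v : ℝ | ∃ (Ω : Type) (_ : MeasurableSpace Ω) (μ : Measure Ω),
        IsProbabilityMeasure μ ∧ ∃ X : Ω → (Fin d → ℝ), Measurable X ∧
        μ {ω | X ω ∈ A} = 1 ∧ Integrable (fun ω => f (X ω)) μ ∧
        (∫ ω, f (X ω) ∂μ) ∈ B ∧ Integrable (fun ω => g (X ω)) μ ∧
        v = ∫ ω, g (X ω) ∂μ }
    = sSup { v : ℝ |
      ∃ (θ : Fin (k + 1) → ℝ) (y : Fin (k + 1) → (Fin d → ℝ)),
        (∀ ℓ, 0 ≤ θ ℓ) ∧ (∀ ℓ, y ℓ ∈ A) ∧ (∑ ℓ, θ ℓ) = 1 ∧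
        (∑ ℓ, θ ℓ • f (y ℓ)) ∈ B ∧ v = ∑ ℓ, θ ℓ * g (y ℓ) } :=
  statement2_general A B f g
end

section
/- Let 𝒜 ⊆ ℝ^d, ℬ ⊆ ℝ^k, 𝒞 ⊆ 𝒜, let f : ℝ^d → ℝ^k be measurable and 𝒞 measurable. Let 𝒳 be the family of all random vectors X in ℝ^d such that Pr{X ∈ 𝒜} = 1 and f(X) is integrable with E[f(X)] ∈ ℬ. Then sup_{X ∈ 𝒳} Pr{X ∈ 𝒞} = max{ P_i : 1 ≤ i ≤ k+1 }, where for each i ∈ {1,…,k+1}, P_i = sup{ Σ_{ℓ=1}^{i} θ_ℓ : θ_ℓ ≥ 0 for 1 ≤ ℓ ≤ k+1, y_ℓ ∈ 𝒞 for 1 ≤ ℓ ≤ i, y_ℓ ∈ 𝒜 \ 𝒞 for i < ℓ ≤ k+1, Σ_{ℓ=1}^{k+1} θ_ℓ = 1, Σ_{ℓ=1}^{k+1} θ_ℓ f(y_ℓ) ∈ ℬ }. -/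
/-!
Put `g x = (f x, 𝟙_C x) ∈ ℝᵏ × ℝ`. For a feasible `X`, the mean `(E f(X), Pr{X ∈ C})` of `g(X)`
lies in the convex hull of `g(A)`: in finite dimension the mean of an integrable random vector lies
in the convex hull of its values on any set of full (outer) probability, by induction on the
dimension, cutting down along a supporting hyperplane at the mean. Carathéodory writes the mean as
a convex combination of at most `k + 2` points of `g(A)`; if there are `k + 2`, pushing the mean up
along the last coordinate until it leaves their simplex through a facet keeps `E f(X)`, does not
decrease the weight on `C`, and leaves `k + 1` points. These are then listed with those in `C`
first. Conversely, every such convex combination is the law of a discrete random vector.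
-/

open MeasureTheory Set

section Convex

variable {E : Type*} [NormedAddCommGroup E] [NormedSpace ℝ E] [FiniteDimensional ℝ E]

theorem Convex.exists_ne_zero_forall_le_of_notMem_interior_s3 [Nontrivial E] {K : Set E}
    (hK : Convex ℝ K) {x : E} (hx : x ∉ interior K) :
    ∃ φ : StrongDual ℝ E, φ ≠ 0 ∧ ∀ y ∈ K, φ y ≤ φ x := by
  by_cases hint : (interior K).Nonempty
  · exact geometric_hahn_banach_of_nonempty_interior_point hK hx hint
  rcases K.eq_empty_or_nonempty with rfl | ⟨y₀, hy₀⟩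
  · obtain ⟨φ, hφ⟩ := exists_ne (0 : StrongDual ℝ E)
    exact ⟨φ, hφ, by simp⟩
  -- `K` has empty interior, so it lies in a proper affine subspace, on which a nonzero
  -- functional is constant; its sign is then chosen to put `x` on the upper side.
  have hspan : (affineSpan ℝ K).direction < ⊤ := by
    rw [lt_top_iff_ne_top, Ne, AffineSubspace.direction_eq_top_iff_of_nonempty
      ((affineSpan_nonempty ℝ).2 ⟨y₀, hy₀⟩), ← hK.interior_nonempty_iff_affineSpan_eq_top]
    exact hint
  obtain ⟨ψ, hψ0, hψ⟩ := Submodule.exists_le_ker_of_lt_top _ hspan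
  have hconst : ∀ y ∈ K, ψ y = ψ y₀ := fun y hy => by
    have : y - y₀ ∈ (affineSpan ℝ K).direction :=
      AffineSubspace.vsub_mem_direction (subset_affineSpan ℝ K hy) (subset_affineSpan ℝ K hy₀)
    simpa [sub_eq_zero] using hψ this
  have hψ0' : LinearMap.toContinuousLinearMap ψ ≠ 0 := by simpa using hψ0
  rcases le_total (ψ y₀) (ψ x) with h | h
  · exact ⟨LinearMap.toContinuousLinearMap ψ, hψ0', fun y hy => by simp [hconst y hy, h]⟩
  · exact ⟨-LinearMap.toContinuousLinearMap ψ, neg_ne_zero.2 hψ0',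
      fun y hy => by simp [hconst y hy, h]⟩

end Convex

section Integral

variable {Ω : Type*} [MeasurableSpace Ω] {μ : Measure Ω} [IsProbabilityMeasure μ]

theorem ae_mem_of_measure_eq_one_of_subset {s t : Set Ω} (hs : μ s = 1)
    (ht : NullMeasurableSet t μ) (hst : s ⊆ t) : ∀ᵐ ω ∂μ, ω ∈ t :=
  (ae_iff_measure_eq ht).2 <| le_antisymm (measure_mono (subset_univ t)) <| by
    rw [measure_univ, ← hs]; exact measure_mono hst

theorem integral_mem_convexHull_image {E : Type*} [NormedAddCommGroup E] [NormedSpace ℝ E]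
    [FiniteDimensional ℝ E] {Z : Ω → E} (hZ : Integrable Z μ) {s : Set Ω} (hs : μ s = 1) :
    ∫ ω, Z ω ∂μ ∈ convexHull ℝ (Z '' s) := by
  induction hn : Module.finrank ℝ E using Nat.strong_induction_on generalizing E s with
  | _ n ih =>
  set m := ∫ ω, Z ω ∂μ
  by_contra hm
  obtain ⟨ω₀, hω₀⟩ : s.Nonempty := nonempty_of_measure_ne_zero (μ := μ) (by simp [hs])
  cases subsingleton_or_nontrivial E
  · exact hm (subset_convexHull ℝ _ ⟨ω₀, hω₀, Subsingleton.elim _ _⟩)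
  obtain ⟨φ, hφ0, hφ⟩ := (convex_convexHull ℝ (Z '' s)).exists_ne_zero_forall_le_of_notMem_interior_s3
    (fun h => hm (interior_subset h))
  -- `φ ∘ Z ≤ φ m` on `s` and has mean `φ m`, so `Z` lies a.s. in the hyperplane `φ = φ m`.
  have hφZ : Integrable (fun ω => φ (Z ω)) μ := φ.integrable_comp hZ
  have hle : (fun ω => φ (Z ω)) ≤ᵐ[μ] fun _ => φ m :=
    ae_mem_of_measure_eq_one_of_subset hs
      (nullMeasurableSet_le hφZ.aemeasurable aemeasurable_const)
      fun ω hω => hφ _ (subset_convexHull ℝ _ ⟨ω, hω, rfl⟩)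
  have heq : (fun ω => φ (Z ω)) =ᵐ[μ] fun _ => φ m := by
    rw [← integral_eq_iff_of_ae_le hφZ (integrable_const _) hle, φ.integral_comp_comm hZ]
    simp [m]
  set H := LinearMap.ker (φ : E →ₗ[ℝ] ℝ)
  obtain ⟨π, hπ⟩ := Submodule.ClosedComplemented.of_finiteDimensional H
  have hH : H ≠ ⊤ := fun h => hφ0 (ContinuousLinearMap.coe_injective (LinearMap.ker_eq_top.1 h))
  have hZm : Integrable (fun ω => Z ω - m) μ := hZ.sub (integrable_const m)
  have hmean : ∫ ω, π (Z ω - m) ∂μ = 0 := by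
    rw [π.integral_comp_comm hZm, integral_sub hZ (integrable_const m)]
    simp [m]
  have hst : μ (s ∩ {ω | φ (Z ω) = φ m}) = 1 := by rw [measure_inter_conull heq, hs]
  have hzero := ih _ (hn ▸ Submodule.finrank_lt hH) (π.integrable_comp hZm) hst rfl
  rw [hmean] at hzero
  let a : H →ᵃ[ℝ] E := H.subtype.toAffineMap + AffineMap.const ℝ H m
  apply hm
  have h0 : a 0 = m := by simp [a]
  rw [← h0]
  refine convexHull_mono ?_ (a.image_convexHull _ ▸ mem_image_of_mem a hzero)
  rintro _ ⟨_, ⟨ω, ⟨hωs, hωt⟩, rfl⟩, rfl⟩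
  refine ⟨ω, hωs, ?_⟩
  have hωH : Z ω - m ∈ H := by simpa [H, sub_eq_zero] using hωt
  simp [a, hπ ⟨_, hωH⟩]

end Integral

section Caratheodory

variable {E : Type*} [AddCommGroup E] [Module ℝ E]

theorem AffineBasis.exists_add_smul_mem_convexHull_image_compl {ι : Type*} [Fintype ι]
    (b : AffineBasis ι ℝ E) {x : E} (hx : x ∈ convexHull ℝ (range b)) {v : E} (hv : v ≠ 0) :
    ∃ j, ∃ t : ℝ, 0 ≤ t ∧ x + t • v ∈ convexHull ℝ (b '' {j}ᶜ) := by
  classical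
  set c : ι → ℝ := fun i => (b.coord i).linear v
  have hcoord : ∀ i (t : ℝ), b.coord i (x + t • v) = b.coord i x + t * c i := fun i t => by
    rw [add_comm x, ← vadd_eq_add, AffineMap.map_vadd, vadd_eq_add, map_smul, smul_eq_mul, add_comm]
  rw [b.convexHull_eq_nonneg_coord] at hx
  -- The coordinates of `x + t • v` are affine in `t` with slopes `c i` summing to zero;
  -- `t` is increased until the first coordinate with negative slope vanishes.
  have hc_sum : ∑ i, c i = 0 := by
    have h := b.sum_coord_apply_eq_one (x + (1 : ℝ) • v)
    simp only [hcoord, one_mul, Finset.sum_add_distrib, b.sum_coord_apply_eq_one] at h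
    linarith
  have hc_neg : ∃ i, c i < 0 := by
    by_contra! hc
    have hc0 : ∀ i, c i = 0 := fun i =>
      (Finset.sum_eq_zero_iff_of_nonneg fun i _ => hc i).1 hc_sum i (Finset.mem_univ i)
    exact hv (add_eq_left.1 (b.ext_elem fun i => by simpa [hc0] using hcoord i 1))
  obtain ⟨j, hj, hjmin⟩ := Finset.exists_min_image {i | c i < 0}
    (fun i => b.coord i x / -c i) (by obtain ⟨i, hi⟩ := hc_neg; exact ⟨i, by simpa using hi⟩)
  have hcj : c j < 0 := by simpa using hj
  set t := b.coord j x / -c j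
  have hy : ∀ i, 0 ≤ b.coord i (x + t • v) := fun i => by
    rw [hcoord]
    rcases lt_or_ge (c i) 0 with hci | hci
    · have := hjmin i (by simpa using hci)
      rw [le_div_iff₀ (neg_pos.2 hci)] at this
      linarith
    · exact add_nonneg (hx i) (mul_nonneg (div_nonneg (hx j) (neg_nonneg.2 hcj.le)) hci)
  have hyj : b.coord j (x + t • v) = 0 := by
    rw [hcoord]
    simp only [t]
    field_simp [hcj.ne]
    ring
  refine ⟨j, t, div_nonneg (hx j) (neg_nonneg.2 hcj.le), ?_⟩
  rw [← b.linear_combination_coord_eq_self (x + t • v),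
    ← Finset.add_sum_erase _ _ (Finset.mem_univ j),
    hyj, zero_smul, zero_add]
  refine (convex_convexHull ℝ _).sum_mem (fun i _ => hy i) ?_
    fun i hi => subset_convexHull ℝ _ ⟨i, Finset.ne_of_mem_erase hi, rfl⟩
  rw [Finset.sum_erase Finset.univ (f := fun i => b.coord i (x + t • v)) hyj,
    b.sum_coord_apply_eq_one]

theorem exists_add_smul_mem_convexHull_of_card_le_finrank [FiniteDimensional ℝ E] {T : Set E}
    {x : E} (hx : x ∈ convexHull ℝ T) {v : E} (hv : v ≠ 0) :
    ∃ u : Finset E, ↑u ⊆ T ∧ u.card ≤ Module.finrank ℝ E ∧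
      ∃ t : ℝ, 0 ≤ t ∧ x + t • v ∈ convexHull ℝ (u : Set E) := by
  classical
  rw [convexHull_eq_union] at hx
  simp only [mem_iUnion] at hx
  obtain ⟨u, huT, hai, hxu⟩ := hx
  have hcard : u.card ≤ Module.finrank ℝ E + 1 := by
    simpa using hai.card_le_finrank_succ.trans (Nat.succ_le_succ (Submodule.finrank_le _))
  rcases hcard.lt_or_eq with hlt | heq
  · exact ⟨u, huT, Nat.lt_succ_iff.1 hlt, 0, le_rfl, by simpa using hxu⟩
  -- `u` is an affine basis, i.e. a full-dimensional simplex, and the ray leaves it through a facet.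
  let b : AffineBasis u ℝ E :=
    ⟨_, hai, hai.affineSpan_eq_top_iff_card_eq_finrank_add_one.2 (by simpa using heq)⟩
  have hb : range b = u := Subtype.range_coe
  obtain ⟨j, t, ht, hxt⟩ := b.exists_add_smul_mem_convexHull_image_compl (hb ▸ hxu) hv
  refine ⟨u.erase j, (Finset.coe_subset.2 (Finset.erase_subset _ _)).trans huT, ?_, t, ht,
    convexHull_mono ?_ hxt⟩
  · rw [Finset.card_erase_of_mem j.2, heq]; rfl
  · rintro _ ⟨i, hij, rfl⟩
    exact Finset.mem_erase.2 ⟨fun h => hij (Subtype.ext h), i.2⟩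

end Caratheodory

theorem exists_fin_family_mem_iff_le {α ι : Type*} [Fintype ι] {k : ℕ}
    (hι : Fintype.card ι ≤ k + 1) (C : Set α) {θ : ι → ℝ} (hθ : ∀ j, 0 ≤ θ j) {y : ι → α}
    (hC : ∃ j, y j ∈ C) :
    ∃ (i : Fin (k + 1)) (θ' : Fin (k + 1) → ℝ) (y' : Fin (k + 1) → α),
      (∀ ℓ, 0 ≤ θ' ℓ) ∧ (∀ ℓ, ∃ j, y' ℓ = y j) ∧ (∀ ℓ, y' ℓ ∈ C ↔ ℓ ≤ i) ∧
      ∀ {M : Type} [AddCommMonoid M] [Module ℝ M] (F : α → M),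
        ∑ ℓ, θ' ℓ • F (y' ℓ) = ∑ j, θ j • F (y j) := by
  classical
  obtain ⟨j₀, hj₀⟩ := hC
  -- Pad to `k + 1` members with weightless copies of a point of `C`.
  let Y : ι ⊕ Fin (k + 1 - Fintype.card ι) → α := Sum.elim y fun _ => y j₀
  let Θ : ι ⊕ Fin (k + 1 - Fintype.card ι) → ℝ := Sum.elim θ 0
  have hcard : Fintype.card (ι ⊕ Fin (k + 1 - Fintype.card ι)) = k + 1 := by
    simp only [Fintype.card_sum, Fintype.card_fin]; omega
  set N := Fintype.card {x // Y x ∈ C}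
  have hN : 0 < N := Fintype.card_pos_iff.2 ⟨⟨Sum.inl j₀, hj₀⟩⟩
  have hNk : N ≤ k + 1 := hcard ▸ Fintype.card_subtype_le _
  let i : Fin (k + 1) := ⟨N - 1, by omega⟩
  have hi : Fintype.card {ℓ // ℓ ≤ i} = N := by
    have : Fintype.card {ℓ // ℓ ≤ i} = i + 1 := by
      rw [Fintype.card_subtype, ← Fin.card_Iic i]; congr 1; ext; simp
    rw [this]; simp only [i]; omega
  let e₁ : {ℓ // ℓ ≤ i} ≃ {x // Y x ∈ C} := Fintype.equivOfCardEq hi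
  let e₂ : {ℓ // ¬ ℓ ≤ i} ≃ {x // Y x ∉ C} := Fintype.equivOfCardEq <| by
    rw [Fintype.card_subtype_compl, Fintype.card_subtype_compl, hi, hcard, Fintype.card_fin]
  let σ : Fin (k + 1) ≃ ι ⊕ Fin (k + 1 - Fintype.card ι) :=
    (Equiv.sumCompl _).symm.trans ((Equiv.sumCongr e₁ e₂).trans (Equiv.sumCompl _))
  have hσ : ∀ ℓ, Y (σ ℓ) ∈ C ↔ ℓ ≤ i := fun ℓ => by
    by_cases h : ℓ ≤ i
    · simpa [σ, h] using (e₁ ⟨ℓ, h⟩).2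
    · simpa [σ, h] using (e₂ ⟨ℓ, h⟩).2
  have hΘ : ∀ z, 0 ≤ Θ z := by rintro (j | _) <;> simp [Θ, hθ]
  have hY : ∀ z, ∃ j, Y z = y j := by rintro (j | _) <;> exact ⟨_, rfl⟩
  refine ⟨i, Θ ∘ σ, Y ∘ σ, fun ℓ => hΘ (σ ℓ), fun ℓ => hY (σ ℓ), hσ, fun F => ?_⟩
  exact (Equiv.sum_comp σ fun z => Θ z • F (Y z)).trans (by simp [Θ, Y, Fintype.sum_sum_type])

section Barycenter

variable {α : Type*} {k : ℕ} (A : Set α) (B : Set (Fin k → ℝ)) (C : Set α) (f : α → Fin k → ℝ)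

def blockWeights (i : Fin (k + 1)) : Set ℝ :=
  { p : ℝ | ∃ (θ : Fin (k + 1) → ℝ) (y : Fin (k + 1) → α),
    (∀ ℓ, 0 ≤ θ ℓ) ∧ (∀ ℓ, ℓ ≤ i → y ℓ ∈ C) ∧ (∀ ℓ, i < ℓ → y ℓ ∈ A \ C) ∧
    (∑ ℓ, θ ℓ) = 1 ∧ (∑ ℓ, θ ℓ • f (y ℓ)) ∈ B ∧ p = ∑ ℓ ∈ Finset.Iic i, θ ℓ }

theorem blockWeights_subset_Icc (i : Fin (k + 1)) : blockWeights A B C f i ⊆ Icc 0 1 := by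
  rintro _ ⟨θ, y, hθ, -, -, hθ1, -, rfl⟩
  exact ⟨Finset.sum_nonneg fun ℓ _ => hθ ℓ,
    hθ1 ▸ Finset.sum_le_sum_of_subset_of_nonneg (Finset.subset_univ _) fun ℓ _ _ => hθ ℓ⟩

variable {A B C f}

theorem exists_le_mem_blockWeights_of_mem_convexHull {b : Fin k → ℝ} (hb : b ∈ B) {p : ℝ}
    (hp : 0 < p) (hbp : (b, p) ∈ convexHull ℝ ((fun x => (f x, C.indicator 1 x)) '' A)) :
    ∃ i, ∃ q ∈ blockWeights A B C f i, p ≤ q := by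
  classical
  -- Moving along the `C`-indicator coordinate only increases the weight on `C`.
  obtain ⟨u, huA, hcard, t, ht, hmem⟩ :=
    exists_add_smul_mem_convexHull_of_card_le_finrank hbp (v := ((0 : Fin k → ℝ), (1 : ℝ)))
      (by simp)
  obtain ⟨w, hw0, hw1, hwsum⟩ := Finset.mem_convexHull'.1 hmem
  choose y hyA hyu using fun z : u => huA z.2
  have hsum : ∑ z : u, w z • (f (y z), C.indicator 1 (y z)) = (b, p + t) := by
    simp_rw [hyu]
    rw [Finset.sum_coe_sort u fun z => w z • z, hwsum]
    simp
  have hfsum : ∑ z : u, w z • f (y z) = b := by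
    simpa only [Prod.fst_sum, Prod.smul_fst] using congrArg Prod.fst hsum
  have hCsum : ∑ z : u, w z • C.indicator (1 : α → ℝ) (y z) = p + t := by
    simpa only [Prod.snd_sum, Prod.smul_snd] using congrArg Prod.snd hsum
  have hyC : ∃ z, y z ∈ C := by
    by_contra! h
    simp [indicator_of_notMem (h _)] at hCsum
    linarith
  obtain ⟨i, θ, y', hθ, hy', hy'C, hθsum⟩ := exists_fin_family_mem_iff_le (k := k)
    (by simpa using hcard) C (θ := fun z : u => w z) (fun z => hw0 z z.2) hyC
  have hIic : ∑ ℓ ∈ Finset.Iic i, θ ℓ = ∑ ℓ, θ ℓ • C.indicator (1 : α → ℝ) (y' ℓ) := by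
    simp only [indicator_apply, hy'C, Pi.one_apply, smul_eq_mul, mul_ite, mul_one, mul_zero,
      ← Finset.sum_filter]
    congr 1
    ext ℓ
    simp
  refine ⟨i, _, ⟨θ, y', hθ, fun ℓ hℓ => (hy'C ℓ).2 hℓ, fun ℓ hℓ => ⟨?_, fun h => ?_⟩, ?_, ?_, rfl⟩,
    ?_⟩
  · obtain ⟨z, hz⟩ := hy' ℓ; exact hz ▸ hyA z
  · exact not_le.2 hℓ ((hy'C ℓ).1 h)
  · have h1 := hθsum fun _ => (1 : ℝ)
    simp only [smul_eq_mul, mul_one] at h1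
    rw [h1, Finset.sum_coe_sort u w, hw1]
  · rwa [hθsum, hfsum]
  · rw [hIic, hθsum, hCsum]; linarith

variable [MeasurableSpace α] (A B C f)

def feasibleProbs : Set ℝ :=
  { p : ℝ | ∃ (Ω : Type) (_ : MeasurableSpace Ω) (μ : Measure Ω),
    IsProbabilityMeasure μ ∧ ∃ X : Ω → α, Measurable X ∧
    μ {ω | X ω ∈ A} = 1 ∧ Integrable (fun ω => f (X ω)) μ ∧
    (∫ ω, f (X ω) ∂μ) ∈ B ∧ p = (μ {ω | X ω ∈ C}).toReal }

theorem feasibleProbs_subset_Icc : feasibleProbs A B C f ⊆ Icc 0 1 := by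
  rintro _ ⟨Ω, _, μ, _, X, -, -, -, -, rfl⟩
  exact ⟨ENNReal.toReal_nonneg,
    ENNReal.toReal_le_of_le_ofReal zero_le_one (by simpa using prob_le_one)⟩

variable {A B C f}

theorem blockWeights_subset_feasibleProbs (hCA : C ⊆ A) (i : Fin (k + 1)) :
    blockWeights A B C f i ⊆ feasibleProbs A B C f := by
  rintro _ ⟨θ, y, hθ, hyC, hyAC, hθ1, hB, rfl⟩
  let P : PMF (Fin (k + 1)) := PMF.ofFintype (fun ℓ => ENNReal.ofReal (θ ℓ)) <| by
    rw [← ENNReal.ofReal_sum_of_nonneg fun ℓ _ => hθ ℓ, hθ1, ENNReal.ofReal_one]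
  have hP : ∀ ℓ, (P ℓ).toReal = θ ℓ := fun ℓ => ENNReal.toReal_ofReal (hθ ℓ)
  have hyC_iff : ∀ ℓ, y ℓ ∈ C ↔ ℓ ≤ i := fun ℓ =>
    ⟨fun h => not_lt.1 fun hlt => (hyAC ℓ hlt).2 h, hyC ℓ⟩
  refine ⟨Fin (k + 1), inferInstance, P.toMeasure, inferInstance, y, measurable_of_finite y,
    ?_, Integrable.of_finite, ?_, ?_⟩
  · have : {ℓ | y ℓ ∈ A} = univ := eq_univ_of_forall fun ℓ =>
      (le_or_gt ℓ i).elim (fun h => hCA (hyC ℓ h)) fun h => (hyAC ℓ h).1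
    rw [this, measure_univ]
  · simpa [PMF.integral_eq_sum, hP] using hB
  · have : {ℓ | y ℓ ∈ C} = ↑(Finset.Iic i) := by ext ℓ; simp [hyC_iff]
    rw [this, PMF.toMeasure_apply_finset, ENNReal.toReal_sum fun ℓ _ => PMF.apply_ne_top P ℓ]
    simp only [hP]

theorem mem_convexHull_of_mem_feasibleProbs (hC : MeasurableSet C) {p : ℝ}
    (hp : p ∈ feasibleProbs A B C f) :
    ∃ b ∈ B, (b, p) ∈ convexHull ℝ ((fun x => (f x, C.indicator 1 x)) '' A) := by
  obtain ⟨Ω, _, μ, _, X, hX, hXA, hfX, hB, rfl⟩ := hp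
  have hXC : MeasurableSet (X ⁻¹' C) := hX hC
  have hind : (fun ω => C.indicator (1 : α → ℝ) (X ω)) = (X ⁻¹' C).indicator 1 := by
    ext ω; by_cases h : X ω ∈ C <;> simp [h]
  have hZ : Integrable (fun ω => (f (X ω), C.indicator (1 : α → ℝ) (X ω))) μ :=
    hfX.prodMk (hind ▸ (integrable_const 1).indicator hXC)
  refine ⟨_, hB, ?_⟩
  have hmean := integral_mem_convexHull_image hZ hXA
  rw [integral_pair hfX (hZ.snd), hind, integral_indicator_one hXC] at hmean
  exact convexHull_mono (by rintro _ ⟨ω, hω, rfl⟩; exact ⟨X ω, hω, rfl⟩) hmean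

end Barycenter

theorem statement3_general {d k : ℕ}
    (A : Set (Fin d → ℝ)) (B : Set (Fin k → ℝ)) (C : Set (Fin d → ℝ))
    (hCA : C ⊆ A) (hC : MeasurableSet C)
    (f : (Fin d → ℝ) → (Fin k → ℝ)) :
    sSup { p : ℝ | ∃ (Ω : Type) (_ : MeasurableSpace Ω) (μ : Measure Ω),
        IsProbabilityMeasure μ ∧ ∃ X : Ω → (Fin d → ℝ), Measurable X ∧
        μ {ω | X ω ∈ A} = 1 ∧ Integrable (fun ω => f (X ω)) μ ∧
        (∫ ω, f (X ω) ∂μ) ∈ B ∧ p = (μ {ω | X ω ∈ C}).toReal }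
    = ⨆ i : Fin (k + 1), sSup { p : ℝ |
      ∃ (θ : Fin (k + 1) → ℝ) (y : Fin (k + 1) → (Fin d → ℝ)),
        (∀ ℓ, 0 ≤ θ ℓ) ∧ (∀ ℓ, ℓ ≤ i → y ℓ ∈ C) ∧ (∀ ℓ, i < ℓ → y ℓ ∈ A \ C) ∧
        (∑ ℓ, θ ℓ) = 1 ∧ (∑ ℓ, θ ℓ • f (y ℓ)) ∈ B ∧
        p = ∑ ℓ ∈ Finset.Iic i, θ ℓ } := by
  change sSup (feasibleProbs A B C f) = ⨆ i, sSup (blockWeights A B C f i)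
  have hblock := blockWeights_subset_Icc A B C f
  have hfeas := feasibleProbs_subset_Icc A B C f
  have hRHS : 0 ≤ ⨆ i, sSup (blockWeights A B C f i) :=
    Real.iSup_nonneg fun i => Real.sSup_nonneg fun q hq => (hblock i hq).1
  apply le_antisymm
  · refine Real.sSup_le (fun p hp => ?_) hRHS
    rcases (hfeas hp).1.eq_or_lt with rfl | hp0
    · exact hRHS
    obtain ⟨b, hb, hbp⟩ := mem_convexHull_of_mem_feasibleProbs hC hp
    obtain ⟨i, q, hq, hpq⟩ := exists_le_mem_blockWeights_of_mem_convexHull hb hp0 hbp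
    exact hpq.trans <| (le_csSup (bddAbove_Icc.mono (hblock i)) hq).trans <|
      le_ciSup (f := fun i => sSup (blockWeights A B C f i)) (Set.finite_range _).bddAbove i
  · exact ciSup_le fun i => Real.sSup_le
      (fun q hq => le_csSup (bddAbove_Icc.mono hfeas) (blockWeights_subset_feasibleProbs hCA i hq))
      (Real.sSup_nonneg fun p hp => (hfeas hp).1)

/-- The supremum of `Pr{X ∈ C}` over all random vectors `X` with `Pr{X ∈ A} = 1` and
`E[f(X)] ∈ B` equals the maximum over `i ∈ {1,…,k+1}` of the suprema `P i` over convex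
combinations of `k+1` points, the first `i` of which lie in `C` and the rest in `A \ C`,
with `f`-barycenter in `B`, of the total weight of the first `i` points.
Here `i : Fin (k+1)` encodes the index `i + 1 ∈ {1,…,k+1}`. -/
theorem statement3 {d k : ℕ}
    (A : Set (Fin d → ℝ)) (B : Set (Fin k → ℝ)) (C : Set (Fin d → ℝ))
    (hCA : C ⊆ A) (hC : MeasurableSet C)
    (f : (Fin d → ℝ) → (Fin k → ℝ)) (hf : Measurable f) :
    sSup { p : ℝ | ∃ (Ω : Type) (_ : MeasurableSpace Ω) (μ : Measure Ω),
        IsProbabilityMeasure μ ∧ ∃ X : Ω → (Fin d → ℝ), Measurable X ∧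
        μ {ω | X ω ∈ A} = 1 ∧ Integrable (fun ω => f (X ω)) μ ∧
        (∫ ω, f (X ω) ∂μ) ∈ B ∧ p = (μ {ω | X ω ∈ C}).toReal }
    = ⨆ i : Fin (k + 1), sSup { p : ℝ |
      ∃ (θ : Fin (k + 1) → ℝ) (y : Fin (k + 1) → (Fin d → ℝ)),
        (∀ ℓ, 0 ≤ θ ℓ) ∧ (∀ ℓ, ℓ ≤ i → y ℓ ∈ C) ∧ (∀ ℓ, i < ℓ → y ℓ ∈ A \ C) ∧
        (∑ ℓ, θ ℓ) = 1 ∧ (∑ ℓ, θ ℓ • f (y ℓ)) ∈ B ∧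
        p = ∑ ℓ ∈ Finset.Iic i, θ ℓ } :=
  statement3_general A B C hCA hC f
end

section
/- Let Z be an essentially bounded real random variable with E[Z] = 0 and E[Z^k] ≥ 1 for every integer k ≥ 2. Define L_Z = sup{ u ∈ ℝ : Pr{Z ≥ u} = 1 } (the essential infimum of Z) and U_Z = inf{ v ∈ ℝ : Pr{Z ≤ v} = 1 } (the essential supremum of Z). Then U_Z − L_Z ≥ √5. -/
open MeasureTheory ProbabilityTheory

lemma key_alg (a b m2 m3 : ℝ) (ha : 0 ≤ a) (hb : 0 ≤ b)
    (hm2 : 1 ≤ m2) (hm3 : 1 ≤ m3) (h1 : m2 ≤ a * b)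
    (h2 : m3 ≤ (b - 2*a) * m2 + a^2 * b) :
    Real.sqrt 5 ≤ a + b := by
  set c := Real.sqrt 5 with hcdef
  have hc2 : c^2 = 5 := Real.sq_sqrt (by norm_num)
  have hc0 : 0 < c := Real.sqrt_pos.2 (by norm_num)
  have hab : 1 ≤ a * b := le_trans hm2 h1
  have ha' : 0 < a := by nlinarith
  have hb' : 0 < b := by nlinarith
  have hc3 : c ≤ 3 := by nlinarith
  rcases le_or_gt (2*a) b with hcase | hcase
  · have hkey : 1 ≤ a * b * (b - a) := by nlinarith
    have h5 : 5 ≤ (a + b)^2 := by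
      nlinarith [sq_nonneg (a*b - 1), sq_nonneg (b - a), mul_pos ha' hb',
        sq_nonneg (a*b*(b-a) - 1)]
    nlinarith
  · have hkey : 1 ≤ (b - 2*a) + a^2 * b := by nlinarith
    rcases le_or_gt (2*a) (c - 1) with hsub | hsub
    · nlinarith [mul_nonneg (sub_nonneg.2 hsub) (by linarith : (0:ℝ) ≤ c - 2*a - 0)]
    · have hquad : 0 ≤ a^2 - (c+1)/2 * a + 2 := by nlinarith [sq_nonneg (4*a - (c+1))]
      nlinarith [mul_nonneg (by linarith : (0:ℝ) ≤ 2*a - (c - 1)) hquad]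

/-- If `Z` is an essentially bounded zero-mean real random variable with `E[Z^k] ≥ 1`
for all integers `k ≥ 2`, then the essential supremum minus the essential infimum of `Z`
is at least `√5`. -/
theorem statement4 {Ω : Type*} [MeasurableSpace Ω] (μ : Measure Ω) [IsProbabilityMeasure μ]
    (Z : Ω → ℝ) (hZm : Measurable Z) (M : ℝ) (hbd : ∀ᵐ ω ∂μ, |Z ω| ≤ M)
    (hmean : (∫ ω, Z ω ∂μ) = 0)
    (hmom : ∀ k : ℕ, 2 ≤ k → 1 ≤ ∫ ω, (Z ω) ^ k ∂μ) :
    Real.sqrt 5 ≤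
      sInf { v : ℝ | μ {ω | Z ω ≤ v} = 1 } - sSup { u : ℝ | μ {ω | u ≤ Z ω} = 1 } := by
  -- replace M by |M|
  have hbd' : ∀ᵐ ω ∂μ, |Z ω| ≤ |M| := hbd.mono fun ω h => h.trans (le_abs_self M)
  set M' := |M| with hM'
  have hM'0 : 0 ≤ M' := abs_nonneg M
  set S1 := { u : ℝ | μ {ω | u ≤ Z ω} = 1 } with hS1
  set S2 := { v : ℝ | μ {ω | Z ω ≤ v} = 1 } with hS2
  -- measure-one ↔ a.e. translations
  have meas_le : ∀ v : ℝ, MeasurableSet {ω | Z ω ≤ v} := fun v =>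
    measurableSet_le hZm measurable_const
  have meas_ge : ∀ u : ℝ, MeasurableSet {ω | u ≤ Z ω} := fun u =>
    measurableSet_le measurable_const hZm
  have mem2_iff : ∀ v : ℝ, v ∈ S2 ↔ ∀ᵐ ω ∂μ, Z ω ≤ v := by
    intro v
    rw [hS2, Set.mem_setOf_eq, ← prob_compl_eq_zero_iff (meas_le v), ae_iff]
    rfl
  have mem1_iff : ∀ u : ℝ, u ∈ S1 ↔ ∀ᵐ ω ∂μ, u ≤ Z ω := by
    intro u
    rw [hS1, Set.mem_setOf_eq, ← prob_compl_eq_zero_iff (meas_ge u), ae_iff]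
    rfl
  -- nonemptiness and boundedness
  have hM2 : M' ∈ S2 := (mem2_iff M').2 (hbd'.mono fun ω h => (abs_le.1 h).2)
  have hM1 : (-M') ∈ S1 := (mem1_iff (-M')).2 (hbd'.mono fun ω h => (abs_le.1 h).1)
  have hne2 : S2.Nonempty := ⟨M', hM2⟩
  have hne1 : S1.Nonempty := ⟨-M', hM1⟩
  have hexists : ∀ᵐ ω ∂μ, |Z ω| ≤ M' := hbd'
  have hbdd1 : BddAbove S1 := by
    refine ⟨M', fun u hu => ?_⟩
    have h1 : ∀ᵐ ω ∂μ, u ≤ Z ω := (mem1_iff u).1 hu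
    have h2 := h1.and hexists
    rcases h2.exists with ⟨ω, hω1, hω2⟩
    exact hω1.trans (abs_le.1 hω2).2
  have hbdd2 : BddBelow S2 := by
    refine ⟨-M', fun v hv => ?_⟩
    have h1 : ∀ᵐ ω ∂μ, Z ω ≤ v := (mem2_iff v).1 hv
    have h2 := h1.and hexists
    rcases h2.exists with ⟨ω, hω1, hω2⟩
    exact le_trans (abs_le.1 hω2).1 hω1
  set L := sSup S1 with hL
  set U := sInf S2 with hU
  -- a.e. bounds by L and U
  have hUae : ∀ᵐ ω ∂μ, Z ω ≤ U := by
    have hn : ∀ n : ℕ, ∀ᵐ ω ∂μ, Z ω ≤ U + 1/(n+1) := by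
      intro n
      have : U < U + 1/(n+1) := lt_add_of_pos_right U (by positivity)
      rcases exists_lt_of_csInf_lt hne2 this with ⟨v, hv, hvlt⟩
      exact ((mem2_iff v).1 hv).mono fun ω h => h.trans hvlt.le
    have := (ae_all_iff.2 hn)
    refine this.mono fun ω h => ?_
    by_contra hcon
    push_neg at hcon
    rcases exists_nat_one_div_lt (sub_pos.2 hcon) with ⟨n, hn'⟩
    have := h n
    linarith
  have hLae : ∀ᵐ ω ∂μ, L ≤ Z ω := by
    have hn : ∀ n : ℕ, ∀ᵐ ω ∂μ, L - 1/(n+1) ≤ Z ω := by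
      intro n
      have : L - 1/(n+1) < L := by
        have : (0:ℝ) < 1/(n+1) := by positivity
        linarith
      rcases exists_lt_of_lt_csSup hne1 this with ⟨u, hu, hult⟩
      exact ((mem1_iff u).1 hu).mono fun ω h => le_trans hult.le h
    have := (ae_all_iff.2 hn)
    refine this.mono fun ω h => ?_
    by_contra hcon
    push_neg at hcon
    rcases exists_nat_one_div_lt (sub_pos.2 hcon) with ⟨n, hn'⟩
    have := h n
    linarith
  -- integrability
  have hint : ∀ k : ℕ, Integrable (fun ω => (Z ω)^k) μ := by
    intro k
    refine Integrable.mono' (integrable_const (M'^k)) ((hZm.pow_const k).aestronglyMeasurable) ?_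
    refine hbd'.mono fun ω h => ?_
    rw [Real.norm_eq_abs, abs_pow]
    exact pow_le_pow_left₀ (abs_nonneg _) h k
  have hintZ : Integrable Z μ := by
    have := hint 1; simpa using this
  have m0 : (∫ _ω, (1:ℝ) ∂μ) = 1 := by simp
  set m2 := ∫ ω, (Z ω)^2 ∂μ with hm2def
  set m3 := ∫ ω, (Z ω)^3 ∂μ with hm3def
  have hm2 : 1 ≤ m2 := hmom 2 (by norm_num)
  have hm3 : 1 ≤ m3 := hmom 3 (by norm_num)
  -- L ≤ 0 ≤ U
  have hL0 : L ≤ 0 := by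
    have : (∫ _ω, L ∂μ) ≤ ∫ ω, Z ω ∂μ :=
      integral_mono_ae (integrable_const L) hintZ hLae
    simpa [hmean] using this
  have hU0 : 0 ≤ U := by
    have : (∫ ω, Z ω ∂μ) ≤ ∫ _ω, U ∂μ :=
      integral_mono_ae hintZ (integrable_const U) hUae
    simpa [hmean] using this
  -- first moment inequality : m2 ≤ -L*U
  have hint2 : Integrable (fun ω => (Z ω)^2) μ := hint 2
  have hint3 : Integrable (fun ω => (Z ω)^3) μ := hint 3
  have key1 : m2 ≤ -L * U := by
    have hnn : 0 ≤ ∫ ω, (Z ω - L) * (U - Z ω) ∂μ := by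
      refine integral_nonneg_of_ae ?_
      filter_upwards [hLae, hUae] with ω h1 h2
      exact mul_nonneg (by linarith) (by linarith)
    have heq : (∫ ω, (Z ω - L) * (U - Z ω) ∂μ)
        = (L + U) * (∫ ω, Z ω ∂μ) - m2 - L * U := by
      have hpt : ∀ ω, (Z ω - L) * (U - Z ω)
          = (L + U) * Z ω - (Z ω)^2 - L * U := fun ω => by ring
      simp_rw [hpt]
      have iA : Integrable (fun ω => (L + U) * Z ω) μ := hintZ.const_mul _
      have iB : Integrable (fun ω => (L + U) * Z ω - (Z ω)^2) μ := iA.sub hint2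
      rw [integral_sub iB (integrable_const (L * U)), integral_sub iA hint2,
        integral_const_mul _ _, integral_const]
      simp [hm2def]
    rw [heq, hmean] at hnn
    linarith
  have key2 : m3 ≤ (U + 2*L) * m2 + L^2 * U := by
    have hnn : 0 ≤ ∫ ω, (Z ω - L)^2 * (U - Z ω) ∂μ := by
      refine integral_nonneg_of_ae ?_
      filter_upwards [hLae, hUae] with ω h1 h2
      exact mul_nonneg (sq_nonneg _) (by linarith)
    have heq : (∫ ω, (Z ω - L)^2 * (U - Z ω) ∂μ)
        = (U + 2*L) * m2 - m3 + (L^2 * U) * (∫ _ω, (1:ℝ) ∂μ)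
          - (2*L*U + L^2) * (∫ ω, Z ω ∂μ) := by
      have hpt : ∀ ω, (Z ω - L)^2 * (U - Z ω)
          = (U + 2*L) * (Z ω)^2 - (Z ω)^3 + (L^2 * U) * 1
            - (2*L*U + L^2) * Z ω := fun ω => by ring
      simp_rw [hpt]
      have iA : Integrable (fun ω => (U + 2*L) * (Z ω)^2) μ := hint2.const_mul _
      have iB : Integrable (fun ω => (U + 2*L) * (Z ω)^2 - (Z ω)^3) μ := iA.sub hint3
      have iC : Integrable (fun _ω : Ω => (L^2 * U) * (1:ℝ)) μ := integrable_const _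
      have iD : Integrable (fun ω => (U + 2*L) * (Z ω)^2 - (Z ω)^3 + (L^2 * U) * 1) μ :=
        iB.add iC
      have iE : Integrable (fun ω => (2*L*U + L^2) * Z ω) μ := hintZ.const_mul _
      rw [integral_sub iD iE, integral_add iB iC, integral_sub iA hint3,
        integral_const_mul _ _, integral_const_mul _ _, integral_const_mul _ _]
    rw [heq, hmean, m0] at hnn
    linarith
  -- conclude
  have := key_alg (-L) U m2 m3 (by linarith) hU0 hm2 hm3
    (by linarith [key1]) (by nlinarith [key2])
  calc Real.sqrt 5 ≤ -L + U := this
    _ = U - L := by ring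
end

section
/- Let φ = (1 + √5)/2 be the golden ratio, and let Z be the two-point random variable with Pr{Z = φ} = 1/(√5 · φ) and Pr{Z = −1/φ} = φ/√5. Then E[Z] = 0, E[Z^k] ≥ 1 for every integer k ≥ 2, and U_Z − L_Z = √5, where L_Z = sup{ u ∈ ℝ : Pr{Z ≥ u} = 1 } and U_Z = inf{ v ∈ ℝ : Pr{Z ≤ v} = 1 }. -/
/-!
With `ψ = -1/φ` the conjugate of the golden ratio, `φ ψ = -1` rewrites the two weights as
`-ψ/√5` and `φ/√5`, so `E[Z^(n+1)] = (φ^n - ψ^n)/√5 = F_n` by Binet's formula: the mean is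
`F_0 = 0` and every higher moment is a positive Fibonacci number. Both atoms carry positive
mass, so the essential infimum and supremum are `ψ` and `φ`, whose difference is `√5`.
-/

open MeasureTheory ProbabilityTheory

namespace Real

open goldenRatio

lemma goldenConj_lt_goldenRatio : ψ < φ :=
  goldenConj_neg.trans goldenRatio_pos

lemma neg_one_div_goldenRatio : -(1 / φ) = ψ := by
  rw [one_div, inv_goldenRatio, neg_neg]

lemma one_div_sqrt_five_mul_goldenRatio : 1 / (√5 * φ) = -ψ / √5 := by
  rw [one_div, mul_inv, ← one_div, ← one_div, ← neg_one_div_goldenRatio]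
  ring

lemma neg_goldenConj_div_sqrt_five_add_goldenRatio_div_sqrt_five : -ψ / √5 + φ / √5 = 1 := by
  rw [← add_div, neg_add_eq_sub, goldenRatio_sub_goldenConj, div_self (by positivity)]

lemma goldenRatio_pow_mul_add_goldenConj_pow_mul (n : ℕ) :
    φ ^ (n + 1) * (-ψ / √5) + ψ ^ (n + 1) * (φ / √5) = Nat.fib n := by
  rw [coe_fib_eq, pow_succ, pow_succ]
  linear_combination (ψ ^ n - φ ^ n) / √5 * goldenRatio_mul_goldenConj

end Real

section TwoPoint

variable {Ω : Type*} [MeasurableSpace Ω] {μ : Measure Ω} {Z : Ω → ℝ} {a b : ℝ}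

lemma ae_eq_or_eq_of_measure_add_measure_eq_one [IsProbabilityMeasure μ] (hZ : Measurable Z)
    (hab : a ≠ b) (h : μ {ω | Z ω = a} + μ {ω | Z ω = b} = 1) :
    ∀ᵐ ω ∂μ, Z ω = a ∨ Z ω = b := by
  have hA : MeasurableSet {ω | Z ω = a} := hZ (measurableSet_singleton a)
  have hB : MeasurableSet {ω | Z ω = b} := hZ (measurableSet_singleton b)
  have hdisj : Disjoint {ω | Z ω = a} {ω | Z ω = b} :=
    Set.disjoint_left.2 fun ω ha hb => hab (ha.symm.trans hb)
  exact (mem_ae_iff_prob_eq_one (hA.union hB)).2 (by rwa [measure_union hdisj hB])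

lemma integral_comp_of_ae_eq_or_eq [IsFiniteMeasure μ] {E : Type*} [NormedAddCommGroup E]
    [NormedSpace ℝ E] [CompleteSpace E] (hZ : Measurable Z) (hab : a ≠ b)
    (hae : ∀ᵐ ω ∂μ, Z ω = a ∨ Z ω = b) (g : ℝ → E) :
    ∫ ω, g (Z ω) ∂μ = μ.real {ω | Z ω = a} • g a + μ.real {ω | Z ω = b} • g b := by
  have hA : MeasurableSet {ω | Z ω = a} := hZ (measurableSet_singleton a)
  have hB : MeasurableSet {ω | Z ω = b} := hZ (measurableSet_singleton b)
  have hcongr : (fun ω => g (Z ω)) =ᵐ[μ] fun ω =>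
      {ω | Z ω = a}.indicator (fun _ => g a) ω + {ω | Z ω = b}.indicator (fun _ => g b) ω := by
    filter_upwards [hae] with ω hω
    rcases hω with h | h
    · simp [h, hab]
    · simp [h, hab.symm]
  rw [integral_congr_ae hcongr, integral_add ((integrable_const _).indicator hA)
    ((integrable_const _).indicator hB), integral_indicator_const _ hA,
    integral_indicator_const _ hB]

variable [IsProbabilityMeasure μ]

lemma setOf_prob_le_eq_one_eq_Ici (hZ : Measurable Z) (hle : ∀ᵐ ω ∂μ, Z ω ≤ b)
    (hatom : μ {ω | Z ω = b} ≠ 0) : {v | μ {ω | Z ω ≤ v} = 1} = Set.Ici b := by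
  ext v
  rw [Set.mem_ofPred_eq, ← mem_ae_iff_prob_eq_one (measurableSet_le hZ measurable_const)]
  refine ⟨fun hv => ?_, fun hv => hle.mono fun ω hω => hω.trans hv⟩
  obtain ⟨ω, hωb, hωv⟩ := ((frequently_ae_iff.2 hatom).and_eventually hv).exists
  exact hωb ▸ hωv

lemma setOf_prob_ge_eq_one_eq_Iic (hZ : Measurable Z) (hge : ∀ᵐ ω ∂μ, a ≤ Z ω)
    (hatom : μ {ω | Z ω = a} ≠ 0) : {u | μ {ω | u ≤ Z ω} = 1} = Set.Iic a := by
  ext u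
  rw [Set.mem_ofPred_eq, ← mem_ae_iff_prob_eq_one (measurableSet_le measurable_const hZ)]
  refine ⟨fun hu => ?_, fun hu => hge.mono fun ω hω => hu.trans hω⟩
  obtain ⟨ω, hωa, hωu⟩ := ((frequently_ae_iff.2 hatom).and_eventually hu).exists
  exact hωa ▸ hωu

end TwoPoint

open Real in
/-- The two-point random variable `Z` with `Pr{Z = φ} = 1/(√5 φ)` and
`Pr{Z = -1/φ} = φ/√5`, where `φ = (1+√5)/2` is the golden ratio, has mean zero,
satisfies `E[Z^k] ≥ 1` for all integers `k ≥ 2`, and its essential supremum minus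
its essential infimum equals `√5`. -/
theorem statement5 {Ω : Type*} [MeasurableSpace Ω] (μ : Measure Ω) [IsProbabilityMeasure μ]
    (φ : ℝ) (hφ : φ = (1 + Real.sqrt 5) / 2)
    (Z : Ω → ℝ) (hZm : Measurable Z)
    (h1 : μ {ω | Z ω = φ} = ENNReal.ofReal (1 / (Real.sqrt 5 * φ)))
    (h2 : μ {ω | Z ω = -(1 / φ)} = ENNReal.ofReal (φ / Real.sqrt 5)) :
    (∫ ω, Z ω ∂μ) = 0 ∧
    (∀ k : ℕ, 2 ≤ k → 1 ≤ ∫ ω, (Z ω) ^ k ∂μ) ∧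
    sInf { v : ℝ | μ {ω | Z ω ≤ v} = 1 } - sSup { u : ℝ | μ {ω | u ≤ Z ω} = 1 }
      = Real.sqrt 5 := by
  obtain rfl : φ = goldenRatio := hφ
  rw [one_div_sqrt_five_mul_goldenRatio] at h1
  rw [neg_one_div_goldenRatio] at h2
  have hp : 0 < -goldenConj / √5 := div_pos (neg_pos.2 goldenConj_neg) (by positivity)
  have hq : 0 < goldenRatio / √5 := div_pos goldenRatio_pos (by positivity)
  have hae : ∀ᵐ ω ∂μ, Z ω = goldenRatio ∨ Z ω = goldenConj :=
    ae_eq_or_eq_of_measure_add_measure_eq_one hZm goldenConj_lt_goldenRatio.ne' (by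
      rw [h1, h2, ← ENNReal.ofReal_add hp.le hq.le,
        neg_goldenConj_div_sqrt_five_add_goldenRatio_div_sqrt_five, ENNReal.ofReal_one])
  have hmoment (n : ℕ) : ∫ ω, Z ω ^ (n + 1) ∂μ = Nat.fib n := by
    rw [integral_comp_of_ae_eq_or_eq hZm goldenConj_lt_goldenRatio.ne' hae (· ^ (n + 1)),
      measureReal_def, measureReal_def, h1, h2, ENNReal.toReal_ofReal hp.le,
      ENNReal.toReal_ofReal hq.le, smul_eq_mul, smul_eq_mul, mul_comm, mul_comm (goldenRatio / √5)]
    exact goldenRatio_pow_mul_add_goldenConj_pow_mul n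
  refine ⟨by simpa using hmoment 0, fun k hk => ?_, ?_⟩
  · obtain ⟨n, rfl⟩ := Nat.exists_eq_add_of_le' hk
    rw [hmoment (n + 1)]
    exact_mod_cast Nat.fib_pos.2 n.succ_pos
  · have hle : ∀ᵐ ω ∂μ, Z ω ≤ goldenRatio :=
      hae.mono fun ω hω => hω.elim le_of_eq fun h => h.trans_le goldenConj_lt_goldenRatio.le
    have hge : ∀ᵐ ω ∂μ, goldenConj ≤ Z ω :=
      hae.mono fun ω hω => hω.elim (fun h => h ▸ goldenConj_lt_goldenRatio.le) ge_of_eq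
    rw [setOf_prob_le_eq_one_eq_Ici hZm hle (by rw [h1]; exact (ENNReal.ofReal_pos.2 hp).ne'),
      setOf_prob_ge_eq_one_eq_Iic hZm hge (by rw [h2]; exact (ENNReal.ofReal_pos.2 hq).ne'),
      csInf_Ici, csSup_Iic, goldenRatio_sub_goldenConj]
end

section
/- Let Z be an essentially bounded real random variable with E[Z] = 0, E[Z²] = 1, and E[Z^k] ≥ 1 for every integer k ≥ 3. Define L_Z = sup{ u ∈ ℝ : Pr{Z ≥ u} = 1 } and U_Z = inf{ v ∈ ℝ : Pr{Z ≤ v} = 1 }. Then max(U_Z, |L_Z|) ≥ φ, where φ = (1 + √5)/2 is the golden ratio. -/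
open MeasureTheory ProbabilityTheory

/-- If `Z` is an essentially bounded zero-mean real random variable with `E[Z²] = 1` and
`E[Z^k] ≥ 1` for all integers `k ≥ 3`, then `max(U_Z, |L_Z|) ≥ φ`, where `U_Z` is the
essential supremum and `L_Z` the essential infimum of `Z`, and `φ = (1+√5)/2` is the
golden ratio. -/
theorem statement6 {Ω : Type*} [MeasurableSpace Ω] (μ : Measure Ω) [IsProbabilityMeasure μ]
    (Z : Ω → ℝ) (hZm : Measurable Z) (M : ℝ) (hbd : ∀ᵐ ω ∂μ, |Z ω| ≤ M)
    (hmean : (∫ ω, Z ω ∂μ) = 0)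
    (hvar : (∫ ω, (Z ω) ^ 2 ∂μ) = 1)
    (hmom : ∀ k : ℕ, 3 ≤ k → 1 ≤ ∫ ω, (Z ω) ^ k ∂μ) :
    (1 + Real.sqrt 5) / 2 ≤
      max (sInf { v : ℝ | μ {ω | Z ω ≤ v} = 1 })
        |sSup { u : ℝ | μ {ω | u ≤ Z ω} = 1 }| := by
  have hM0 : ∀ᵐ ω ∂μ, |Z ω| ≤ |M| := hbd.mono fun ω h => h.trans (le_abs_self M)
  have hint : ∀ k : ℕ, Integrable (fun ω => Z ω ^ k) μ := by
    intro k
    refine ⟨(hZm.pow_const k).aestronglyMeasurable, ?_⟩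
    apply MeasureTheory.HasFiniteIntegral.of_bounded (C := |M| ^ k)
    filter_upwards [hM0] with ω h
    simpa [abs_pow] using pow_le_pow_left₀ (abs_nonneg _) h k
  set S := { v : ℝ | μ {ω | Z ω ≤ v} = 1 } with hS
  have hvbound : ∀ v ∈ S, (1 + Real.sqrt 5) / 2 ≤ v := by
    intro v hv
    have hmeas : MeasurableSet {ω | Z ω ≤ v} := hZm measurableSet_Iic
    have hcompl : μ {ω | Z ω ≤ v}ᶜ = 0 := by
      rw [measure_compl hmeas (measure_ne_top μ _), hv, measure_univ, tsub_self]
    have hae : ∀ᵐ ω ∂μ, Z ω ≤ v := by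
      rw [ae_iff]; simpa [Set.compl_setOf] using hcompl
    have h1 : (1:ℝ) ≤ ∫ ω, (Z ω) ^ 3 ∂μ := hmom 3 le_rfl
    have hv1 : (1:ℝ) ≤ v := by
      have hmono : ∫ ω, (Z ω) ^ 3 ∂μ ≤ ∫ ω, v * (Z ω) ^ 2 ∂μ := by
        refine integral_mono_ae (hint 3) ((hint 2).const_mul v) ?_
        filter_upwards [hae] with ω h
        nlinarith [sq_nonneg (Z ω), mul_nonneg (sq_nonneg (Z ω)) (sub_nonneg.2 h)]
      have hev : ∫ ω, v * (Z ω) ^ 2 ∂μ = v := by rw [integral_const_mul, hvar, mul_one]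
      linarith [hev ▸ hmono]
    have hv0 : v ≠ 0 := by linarith
    set w : ℝ := 1 / v with hw
    have hgnn : 0 ≤ ∫ ω, (Z ω + w)^2 * (v - Z ω) ∂μ := by
      refine integral_nonneg_of_ae ?_
      filter_upwards [hae] with ω h
      exact mul_nonneg (sq_nonneg _) (sub_nonneg.2 h)
    have hexp : ∀ ω, (Z ω + w)^2 * (v - Z ω)
        = (v - 2*w) * Z ω ^ 2 + ((2*w*v - w^2) * Z ω + (w^2*v - Z ω ^ 3)) := by
      intro ω; ring
    have hZint : Integrable Z μ := by simpa using hint 1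
    have hB : Integrable (fun ω => (2*w*v - w^2) * Z ω) μ := hZint.const_mul _
    have hC : Integrable (fun ω => w^2*v - Z ω ^ 3) μ := (integrable_const _).sub (hint 3)
    have hA : Integrable (fun ω => (v - 2*w) * Z ω ^ 2) μ := (hint 2).const_mul _
    have i1 : ∫ ω, (v - 2*w) * Z ω ^ 2 ∂μ = v - 2*w := by
      rw [integral_const_mul, hvar, mul_one]
    have i2 : ∫ ω, (2*w*v - w^2) * Z ω ∂μ = 0 := by
      rw [integral_const_mul, hmean, mul_zero]
    have i3 : ∫ ω, (w^2*v - Z ω ^ 3) ∂μ = w^2*v - ∫ ω, (Z ω) ^ 3 ∂μ := by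
      rw [integral_sub (integrable_const _) (hint 3), integral_const]
      simp
    have hIg : ∫ ω, (Z ω + w)^2 * (v - Z ω) ∂μ
        = v - 2*w + (0 + (w^2*v - ∫ ω, (Z ω) ^ 3 ∂μ)) := by
      simp only [hexp]
      have hBC : Integrable (fun ω => (2*w*v - w^2) * Z ω + (w^2*v - Z ω ^ 3)) μ := hB.add hC
      rw [integral_add hA hBC, integral_add hB hC, i1, i2, i3]
    have hwv : w * v = 1 := by rw [hw]; field_simp
    have hkey : v ^ 2 - v - 1 ≥ 0 := by
      rw [hIg] at hgnn
      -- 0 ≤ v - 2w + w²v - I3, I3 ≥ 1, so v - 2w + w²v ≥ 1; multiply by v, use wv = 1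
      have h2 : (1:ℝ) ≤ v - 2*w + w^2*v := by linarith
      have h3 := mul_le_mul_of_nonneg_right h2 (by linarith : (0:ℝ) ≤ v)
      nlinarith [hwv, h3]
    have h5 : Real.sqrt 5 ^ 2 = 5 := Real.sq_sqrt (by norm_num)
    nlinarith [Real.sqrt_nonneg 5, sq_nonneg (2*v - 1 - Real.sqrt 5), hkey, hv1, h5]
  have hMS : |M| ∈ S := by
    have hae : ∀ᵐ ω ∂μ, Z ω ≤ |M| := hM0.mono fun ω h => (le_abs_self _).trans h
    have h0 : μ {ω | Z ω ≤ |M|}ᶜ = 0 := by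
      have := ae_iff.1 hae
      simpa [Set.compl_setOf] using this
    have hmeas : MeasurableSet {ω | Z ω ≤ |M|} := hZm measurableSet_Iic
    have := measure_compl hmeas (measure_ne_top μ _)
    rw [h0, measure_univ] at this
    have : μ {ω | Z ω ≤ |M|} = 1 := by
      have h2 := measure_add_measure_compl (μ := μ) hmeas
      rw [h0, add_zero, measure_univ] at h2
      exact h2
    exact this
  have hfin : (1 + Real.sqrt 5) / 2 ≤ sInf S := le_csInf ⟨|M|, hMS⟩ hvbound
  exact hfin.trans (le_max_left _ _)
end

section
/- Let Y₁, Y₂, … be a sequence of independent real random variables and define Xₙ = Σ_{i=1}^{n} Yᵢ for n ∈ ℕ. Let 𝒮 ⊆ ℝ and let 𝒱 : 𝒮 × ℕ → ℝ be a function such that E[exp(s Xₙ)] ≤ exp(𝒱(s, n)) for all s ∈ 𝒮 and n ∈ ℕ. Then for every γ ∈ ℝ, every m ∈ ℕ, and every s ∈ 𝒮: Pr{ ∃ n ∈ ℕ, s(Xₙ − γ) − 𝒱(s, n) + 𝒱(s, m) ≥ 0 } ≤ exp(𝒱(s, m) − γ s). -/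
/-!
Normalize `exp (s Xₙ)` by its mean: by independence of the increments,
`Mₙ = exp (s Xₙ) / E[exp (s Xₙ)]` is a nonnegative martingale of mean one, so Ville's form of
Doob's maximal inequality gives `P(∃ n, λ ≤ Mₙ) ≤ 1 / λ`. If the boundary is crossed at time `n`,
then `E[exp (s Xₙ)] ≤ exp 𝒱(s, n)` yields `Mₙ ≥ exp (s Xₙ - 𝒱(s, n)) ≥ exp (γ s - 𝒱(s, m))`,
and `λ = exp (γ s - 𝒱(s, m))` gives the bound.
-/

open MeasureTheory ProbabilityTheory Finset Real

section

variable {Ω : Type*} {mΩ : MeasurableSpace Ω} {μ : Measure Ω}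

theorem MeasureTheory.Martingale.measure_exists_ge_le [IsFiniteMeasure μ]
    {ℱ : Filtration ℕ mΩ} {M : ℕ → Ω → ℝ} (hM : Martingale M ℱ μ) (hM_nonneg : 0 ≤ M)
    {ε : ℝ} (hε : 0 < ε) :
    μ {ω | ∃ n, ε ≤ M n ω} ≤ ENNReal.ofReal ((∫ ω, M 0 ω ∂μ) / ε) := by
  lift ε to NNReal using hε.le
  set E : ℕ → Set Ω := fun N ↦
    {ω | ε ≤ (range (N + 1)).sup' nonempty_range_add_one fun k ↦ M k ω}
  have hE_union : {ω | ∃ n, ε ≤ M n ω} = ⋃ N, E N := by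
    ext ω
    simp only [E, Set.mem_ofPred_eq, Set.mem_iUnion, le_sup'_iff, mem_range]
    exact ⟨fun ⟨n, hn⟩ ↦ ⟨n, n, n.lt_succ_self, hn⟩, fun ⟨_, k, _, hk⟩ ↦ ⟨k, hk⟩⟩
  have hE_mono : Monotone E := fun N N' hN ω hω ↦
    le_trans (α := ℝ) hω (sup'_mono _ (range_subset_range.2 (by omega)) _)
  have hE_le (N : ℕ) : μ (E N) * ENNReal.ofReal ε ≤ ENNReal.ofReal (∫ ω, M 0 ω ∂μ) :=
    calc μ (E N) * ENNReal.ofReal ε = ε * μ (E N) := by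
          rw [mul_comm, ENNReal.ofReal_coe_nnreal]
      _ ≤ ENNReal.ofReal (∫ ω in E N, M N ω ∂μ) := maximal_ineq hM.submartingale hM_nonneg N
      _ ≤ ENNReal.ofReal (∫ ω, M N ω ∂μ) := ENNReal.ofReal_le_ofReal <|
          setIntegral_le_integral (hM.integrable N) (ae_of_all _ (hM_nonneg N))
      _ = ENNReal.ofReal (∫ ω, M 0 ω ∂μ) := by
          rw [← setIntegral_univ, ← setIntegral_univ (f := M 0),
            hM.setIntegral_eq N.zero_le MeasurableSet.univ]
  rw [hE_union, hE_mono.measure_iUnion, ENNReal.ofReal_div_of_pos hε]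
  exact iSup_le fun N ↦
    (ENNReal.le_div_iff_mul_le (.inl (ENNReal.ofReal_pos.2 hε).ne') (by simp)).2 (hE_le N)

theorem ProbabilityTheory.Indep.setIntegral_mul_eq_mul_integral {m₁ m₂ : MeasurableSpace Ω}
    (hm₁ : m₁ ≤ mΩ) (hm₂ : m₂ ≤ mΩ) (hind : Indep m₁ m₂ μ) {f g : Ω → ℝ}
    (hf : Measurable[m₁] f) (hg : Measurable[m₂] g) {B : Set Ω} (hB : MeasurableSet[m₁] B) :
    ∫ ω in B, f ω * g ω ∂μ = (∫ ω in B, f ω ∂μ) * ∫ ω, g ω ∂μ := by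
  have hBf : Measurable[m₁] (B.indicator f) := hf.indicator hB
  have hindep : B.indicator f ⟂ᵢ[μ] g := (IndepFun_iff_Indep _ _ _).2 <|
    indep_of_indep_of_le_right (indep_of_indep_of_le_left hind hBf.comap_le) hg.comap_le
  rw [← integral_indicator (hm₁ _ hB), ← integral_indicator (hm₁ _ hB),
    ← hindep.integral_fun_mul_eq_mul_integral (hBf.mono hm₁ le_rfl).aestronglyMeasurable
      (hg.mono hm₂ le_rfl).aestronglyMeasurable]
  simp only [Set.indicator_mul_left]

theorem ProbabilityTheory.iIndepFun.indep_natural_comap_succ {Y : ℕ → Ω → ℝ}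
    (hY : ∀ i, Measurable (Y i)) (hindep : iIndepFun Y μ) (n : ℕ) :
    Indep (Filtration.natural Y (fun i ↦ (hY i).stronglyMeasurable) n)
      ((inferInstance : MeasurableSpace ℝ).comap (Y (n + 1))) μ := by
  have := indep_iSup_of_disjoint (fun i ↦ (hY i).comap_le)
    ((iIndepFun_iff_iIndep _ _ _).1 hindep) (S := Set.Iic n) (T := {n + 1}) (by simp)
  simp only [Set.mem_Iic, Set.mem_singleton_iff, iSup_iSup_eq_left] at this
  exact this

noncomputable def expPartialSum (Y : ℕ → Ω → ℝ) (s : ℝ) (n : ℕ) (ω : Ω) : ℝ :=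
  exp (s * ∑ i ∈ range n, Y i ω)

/-- Shifted by one so that the `n`-th term is measurable for the `n`-th σ-algebra of the natural
filtration of `Y`, which is generated by `Y 0, …, Y n`. -/
noncomputable def normalizedExpPartialSum (μ : Measure Ω) (Y : ℕ → Ω → ℝ) (s : ℝ) (n : ℕ)
    (ω : Ω) : ℝ :=
  expPartialSum Y s (n + 1) ω / ∫ x, expPartialSum Y s (n + 1) x ∂μ

variable {Y : ℕ → Ω → ℝ} {s : ℝ}

lemma expPartialSum_succ (n : ℕ) (ω : Ω) :
    expPartialSum Y s (n + 1) ω = expPartialSum Y s n ω * exp (s * Y n ω) := by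
  simp only [expPartialSum, sum_range_succ, mul_add, exp_add]

lemma measurable_expPartialSum_natural (hY : ∀ i, Measurable (Y i)) (n : ℕ) :
    Measurable[Filtration.natural Y (fun i ↦ (hY i).stronglyMeasurable) n]
      (expPartialSum Y s (n + 1)) := by
  have hY_le : ∀ i ∈ range (n + 1),
      Measurable[Filtration.natural Y (fun i ↦ (hY i).stronglyMeasurable) n] (Y i) :=
    fun i hi ↦ ((Filtration.stronglyAdapted_natural (fun i ↦ (hY i).stronglyMeasurable) i).mono
      (Filtration.mono _ (Nat.lt_succ_iff.1 (mem_range.1 hi)))).measurable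
  exact measurable_exp.comp ((Finset.measurable_sum _ hY_le).const_mul s)

lemma setIntegral_expPartialSum_succ_succ (hY : ∀ i, Measurable (Y i)) (hindep : iIndepFun Y μ)
    {n : ℕ} {B : Set Ω}
    (hB : MeasurableSet[Filtration.natural Y (fun i ↦ (hY i).stronglyMeasurable) n] B) :
    ∫ ω in B, expPartialSum Y s (n + 2) ω ∂μ =
      (∫ ω in B, expPartialSum Y s (n + 1) ω ∂μ) * ∫ ω, exp (s * Y (n + 1) ω) ∂μ := by
  simp_rw [expPartialSum_succ (n + 1)]
  exact (hindep.indep_natural_comap_succ hY n).setIntegral_mul_eq_mul_integral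
    (Filtration.le _ n) (hY (n + 1)).comap_le (measurable_expPartialSum_natural hY n)
    (measurable_exp.comp ((comap_measurable (Y (n + 1))).const_mul s)) hB

lemma martingale_normalizedExpPartialSum [IsFiniteMeasure μ] [NeZero μ]
    (hY : ∀ i, Measurable (Y i)) (hindep : iIndepFun Y μ)
    (hint : ∀ n, Integrable (expPartialSum Y s (n + 1)) μ) :
    Martingale (normalizedExpPartialSum μ Y s)
      (Filtration.natural Y (fun i ↦ (hY i).stronglyMeasurable)) μ := by
  refine martingale_of_setIntegral_eq_succ
    (fun n ↦ ((measurable_expPartialSum_natural hY n).div_const _).stronglyMeasurable)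
    (fun n ↦ (hint n).div_const _) fun n B hB ↦ ?_
  have hmul := setIntegral_expPartialSum_succ_succ (s := s) hY hindep hB
  have hmul_univ : ∫ ω, expPartialSum Y s (n + 2) ω ∂μ =
      (∫ ω, expPartialSum Y s (n + 1) ω ∂μ) * ∫ ω, exp (s * Y (n + 1) ω) ∂μ := by
    simpa only [setIntegral_univ] using
      setIntegral_expPartialSum_succ_succ (s := s) (μ := μ) hY hindep (n := n) .univ
  have hfactor_ne : ∫ ω, exp (s * Y (n + 1) ω) ∂μ ≠ 0 := by
    rintro h
    rw [h, mul_zero] at hmul_univ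
    exact (integral_exp_pos (hint (n + 1))).ne' hmul_univ
  simp only [normalizedExpPartialSum, integral_div, hmul, hmul_univ]
  rw [mul_div_mul_right _ _ hfactor_ne]

end

theorem statement7_general {Ω : Type*} [MeasurableSpace Ω] (μ : Measure Ω) [IsProbabilityMeasure μ]
    (Y : ℕ → Ω → ℝ) (hYm : ∀ i, Measurable (Y i))
    (hindep : iIndepFun Y μ)
    (S : Set ℝ) (V : ℝ → ℕ → ℝ)
    (hint : ∀ s ∈ S, ∀ n : ℕ, 1 ≤ n →
      Integrable (fun ω => Real.exp (s * ∑ i ∈ Finset.range n, Y i ω)) μ)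
    (hV : ∀ s ∈ S, ∀ n : ℕ, 1 ≤ n →
      (∫ ω, Real.exp (s * ∑ i ∈ Finset.range n, Y i ω) ∂μ) ≤ Real.exp (V s n))
    (γ : ℝ) (m : ℕ) (s : ℝ) (hs : s ∈ S) :
    μ {ω | ∃ n : ℕ, 1 ≤ n ∧
        0 ≤ s * ((∑ i ∈ Finset.range n, Y i ω) - γ) - V s n + V s m}
      ≤ ENNReal.ofReal (Real.exp (V s m - γ * s)) := by
  have hint_succ (n : ℕ) : Integrable (expPartialSum Y s (n + 1)) μ :=
    hint s hs (n + 1) (Nat.le_add_left 1 n)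
  have hM := martingale_normalizedExpPartialSum hYm hindep hint_succ
  have hM_nonneg : 0 ≤ normalizedExpPartialSum μ Y s := fun n ω ↦
    div_nonneg (exp_pos _).le (integral_exp_pos (hint_succ n)).le
  have hM_zero : ∫ ω, normalizedExpPartialSum μ Y s 0 ω ∂μ = 1 := by
    simp only [normalizedExpPartialSum, integral_div]
    exact div_self (integral_exp_pos (hint_succ 0)).ne'
  have hcrossing : {ω | ∃ n : ℕ, 1 ≤ n ∧
      0 ≤ s * ((∑ i ∈ Finset.range n, Y i ω) - γ) - V s n + V s m} ⊆
      {ω | ∃ n, exp (γ * s - V s m) ≤ normalizedExpPartialSum μ Y s n ω} := by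
    rintro ω ⟨_ | n, hn, hω⟩
    · omega
    refine ⟨n, (le_div_iff₀ (integral_exp_pos (hint_succ n))).2 ?_⟩
    calc exp (γ * s - V s m) * ∫ x, expPartialSum Y s (n + 1) x ∂μ
        ≤ exp (γ * s - V s m) * exp (V s (n + 1)) := by gcongr; exact hV s hs (n + 1) hn
      _ ≤ expPartialSum Y s (n + 1) ω := by
        rw [← exp_add, expPartialSum]; exact exp_le_exp.2 (by linarith)
  calc _ ≤ _ := measure_mono hcrossing
    _ ≤ _ := hM.measure_exists_ge_le hM_nonneg (exp_pos _)
    _ = _ := by rw [hM_zero, one_div, ← exp_neg, neg_sub]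

/-- Uniform exponential inequality for sums of independent random variables whose moment
generating functions are bounded by `exp (𝒱 (s, n))`: for every `γ`, `m ≥ 1` and `s ∈ S`,
`Pr{∃ n ≥ 1, s (Xₙ - γ) - 𝒱(s,n) + 𝒱(s,m) ≥ 0} ≤ exp (𝒱(s,m) - γ s)`, where
`Xₙ = Y₁ + ⋯ + Yₙ`. -/
theorem statement7 {Ω : Type*} [MeasurableSpace Ω] (μ : Measure Ω) [IsProbabilityMeasure μ]
    (Y : ℕ → Ω → ℝ) (hYm : ∀ i, Measurable (Y i))
    (hindep : iIndepFun Y μ)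
    (S : Set ℝ) (V : ℝ → ℕ → ℝ)
    (hint : ∀ s ∈ S, ∀ n : ℕ, 1 ≤ n →
      Integrable (fun ω => Real.exp (s * ∑ i ∈ Finset.range n, Y i ω)) μ)
    (hV : ∀ s ∈ S, ∀ n : ℕ, 1 ≤ n →
      (∫ ω, Real.exp (s * ∑ i ∈ Finset.range n, Y i ω) ∂μ) ≤ Real.exp (V s n))
    (γ : ℝ) (m : ℕ) (hm : 1 ≤ m) (s : ℝ) (hs : s ∈ S) :
    μ {ω | ∃ n : ℕ, 1 ≤ n ∧
        0 ≤ s * ((∑ i ∈ Finset.range n, Y i ω) - γ) - V s n + V s m}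
      ≤ ENNReal.ofReal (Real.exp (V s m - γ * s)) :=
  statement7_general μ Y hYm hindep S V hint hV γ m s hs
end

section
/- Let Y, Y₁, Y₂, … be i.i.d. real random variables and define Xₙ = Σ_{i=1}^{n} Yᵢ for n ∈ ℕ. Let 𝒮 ⊆ ℝ and let φ : 𝒮 → ℝ be a function such that E[exp(s Y)] ≤ exp(φ(s)) for all s ∈ 𝒮. Then for every θ ∈ ℝ, every m ∈ ℕ, and every s ∈ 𝒮: Pr{ ∃ n ∈ ℕ, s(Xₙ − m θ) − φ(s)(n − m) ≥ 0 } ≤ [exp(φ(s) − θ s)]^m. -/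
/-!
The factors `Zᵢ = exp (s Yᵢ - φ s)` are independent, nonnegative and have mean at most `1`, so
their partial products `exp (s Xₙ - n φ s)` form a nonnegative supermartingale. The event in
question says that this supermartingale reaches `exp (m (θ s - φ s))` at some time, and Ville's
maximal inequality bounds the probability of that by `exp (m (φ s - θ s))`.
-/

open MeasureTheory ProbabilityTheory Filter Finset

namespace MeasureTheory

variable {Ω : Type*} {m0 : MeasurableSpace Ω} {μ : Measure Ω} [IsFiniteMeasure μ]
  {ℱ : Filtration ℕ m0} {f : ℕ → Ω → ℝ}

theorem Supermartingale.mul_measureReal_exists_le_le_integral_zero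
    (hf : Supermartingale f ℱ μ) (hf0 : 0 ≤ f) (ε : ℝ) (N : ℕ) :
    ε * μ.real {ω | ∃ k ≤ N, ε ≤ f k ω} ≤ μ[f 0] := by
  set E := {ω | ∃ k ≤ N, ε ≤ f k ω}
  have hE : MeasurableSet E := by
    have : E = ⋃ k ≤ N, {ω | ε ≤ f k ω} := by ext; simp [E]
    rw [this]
    exact .biUnion (Set.to_countable _) fun k _ =>
      measurableSet_le measurable_const ((hf.stronglyAdapted k).mono (ℱ.le k)).measurable
  -- the first time in `[0, N]` at which `f` reaches `ε`, and `N` if there is none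
  set τ : Ω → ℕ∞ := fun ω => (hittingBtwn f (Set.Ici ε) 0 N ω : ℕ)
  have hτ : IsStoppingTime ℱ τ :=
    hf.stronglyAdapted.adapted.isStoppingTime_hittingBtwn measurableSet_Ici
  have hτN : ∀ ω, τ ω ≤ N := fun ω => WithTop.coe_le_coe.mpr (hittingBtwn_le ω)
  have hint : Integrable (stoppedValue f τ) μ :=
    integrable_neg_iff.mp (hf.neg.integrable_stoppedValue hτ hτN)
  have hstop : μ[stoppedValue f τ] ≤ μ[f 0] := by
    simpa [stoppedValue, integral_neg] using
      hf.neg.expected_stoppedValue_mono (isStoppingTime_const ℱ 0) hτ (fun _ => zero_le) hτN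
  calc ε * μ.real E ≤ ∫ ω in E, stoppedValue f τ ω ∂μ :=
        setIntegral_ge_of_const_le_real hE (measure_ne_top μ E)
          (fun ω ⟨k, hkN, hk⟩ => stoppedValue_hittingBtwn_mem ⟨k, ⟨zero_le, hkN⟩, hk⟩)
          hint.integrableOn
    _ ≤ μ[stoppedValue f τ] := setIntegral_le_integral hint (.of_forall fun ω => hf0 _ _)
    _ ≤ μ[f 0] := hstop

theorem Supermartingale.measure_exists_le_le (hf : Supermartingale f ℱ μ) (hf0 : 0 ≤ f)
    {ε : ℝ} (hε : 0 < ε) :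
    μ {ω | ∃ k, ε ≤ f k ω} ≤ ENNReal.ofReal (μ[f 0] / ε) := by
  have hunion : {ω | ∃ k, ε ≤ f k ω} = ⋃ k, {ω | ε ≤ f k ω} := by ext; simp
  rw [hunion, measure_iUnion_eq_iSup_accumulate]
  refine iSup_le fun N => ?_
  have hN :
      Set.accumulate (fun k => {ω | ε ≤ f k ω}) N = {ω | ∃ k ≤ N, ε ≤ f k ω} := by
    ext; simp [Set.mem_accumulate]
  rw [hN, ← ofReal_measureReal]
  refine ENNReal.ofReal_le_ofReal ?_
  rw [le_div_iff₀ hε, mul_comm]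
  exact hf.mul_measureReal_exists_le_le_integral_zero hf0 ε N

end MeasureTheory

namespace ProbabilityTheory

variable {Ω : Type*} {m0 : MeasurableSpace Ω} {μ : Measure Ω}

theorem iIndepFun.integrable_finsetProd {ι : Type*} [IsFiniteMeasure μ] {Z : ι → Ω → ℝ}
    (hZ : iIndepFun Z μ) (hZm : ∀ i, Measurable (Z i)) {s : Finset ι}
    (hint : ∀ i ∈ s, Integrable (Z i) μ) : Integrable (∏ i ∈ s, Z i) μ := by
  classical
  induction s using Finset.induction_on with
  | empty => exact integrable_const 1
  | insert i s hi ih =>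
    rw [prod_insert hi, mul_comm]
    exact (hZ.indepFun_finsetProd_of_notMem hZm hi).integrable_mul
      (ih fun j hj => hint j (mem_insert_of_mem hj)) (hint i (mem_insert_self i s))

theorem iIndepFun.indep_comap_natural {ι : Type*} [Preorder ι] {Z : ι → Ω → ℝ}
    (hZm : ∀ i, StronglyMeasurable (Z i)) (hZ : iIndepFun Z μ) {i j : ι} (hji : ¬j ≤ i) :
    Indep (MeasurableSpace.comap (Z j) inferInstance) (Filtration.natural Z hZm i) μ := by
  have hdisj : Disjoint ({j} : Set ι) (Set.Iic i) := Set.disjoint_singleton_left.mpr hji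
  simpa [Filtration.natural] using
    indep_iSup_of_disjoint (fun k => (hZm k).measurable.comap_le) hZ.iIndep hdisj

theorem iIndepFun.supermartingale_prod_range_succ [IsFiniteMeasure μ] {Z : ℕ → Ω → ℝ}
    (hZm : ∀ i, StronglyMeasurable (Z i)) (hZ : iIndepFun Z μ) (hZ0 : ∀ i, 0 ≤ Z i)
    (hint : ∀ i, Integrable (Z i) μ) (hmean : ∀ i, μ[Z i] ≤ 1) :
    Supermartingale (fun n => ∏ i ∈ range (n + 1), Z i) (Filtration.natural Z hZm) μ := by
  set ℱ := Filtration.natural Z hZm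
  have hadapted : StronglyAdapted ℱ fun n => ∏ i ∈ range (n + 1), Z i := fun n =>
    stronglyMeasurable_prod _ fun i hi =>
      (Filtration.stronglyAdapted_natural hZm i).mono
        (ℱ.mono (Nat.lt_succ_iff.mp (mem_range.mp hi)))
  have hprod_int : ∀ n, Integrable (∏ i ∈ range (n + 1), Z i) μ := fun n =>
    hZ.integrable_finsetProd (fun i => (hZm i).measurable) fun i _ => hint i
  refine supermartingale_nat hadapted hprod_int fun n => ?_
  have hnext : μ[Z (n + 1) | ℱ n] =ᵐ[μ] fun _ => μ[Z (n + 1)] :=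
    condExp_indep_eq (hZm (n + 1)).measurable.comap_le (ℱ.le n)
      (Measurable.of_comap_le le_rfl).stronglyMeasurable
      (hZ.indep_comap_natural hZm (by omega))
  calc μ[∏ i ∈ range (n + 1 + 1), Z i | ℱ n]
      =ᵐ[μ] (∏ i ∈ range (n + 1), Z i) * μ[Z (n + 1) | ℱ n] := by
        rw [prod_range_succ _ (n + 1)]
        exact condExp_mul_of_stronglyMeasurable_left (hadapted n)
          (prod_range_succ Z (n + 1) ▸ hprod_int (n + 1)) (hint _)
    _ =ᵐ[μ] (∏ i ∈ range (n + 1), Z i) * fun _ => μ[Z (n + 1)] := EventuallyEq.rfl.mul hnext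
    _ ≤ᵐ[μ] ∏ i ∈ range (n + 1), Z i := .of_forall fun ω =>
        mul_le_of_le_one_right (by simpa using prod_nonneg fun i _ => hZ0 i ω) (hmean _)

theorem integral_exp_mul_sub_le_one {X : Ω → ℝ} {s c : ℝ}
    (h : ∫ ω, Real.exp (s * X ω) ∂μ ≤ Real.exp c) :
    ∫ ω, Real.exp (s * X ω - c) ∂μ ≤ 1 := by
  simp_rw [Real.exp_sub, integral_div]
  exact (div_le_one (Real.exp_pos c)).mpr h

end ProbabilityTheory

theorem statement8_general {Ω : Type*} [MeasurableSpace Ω] (μ : Measure Ω) [IsProbabilityMeasure μ]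
    (Y₀ : Ω → ℝ) (Y : ℕ → Ω → ℝ) (hYm : ∀ i, Measurable (Y i))
    (hindep : iIndepFun Y μ)
    (hid : ∀ i, IdentDistrib (Y i) Y₀ μ μ)
    (S : Set ℝ) (φ : ℝ → ℝ)
    (hint : ∀ s ∈ S, Integrable (fun ω => Real.exp (s * Y₀ ω)) μ)
    (hφ : ∀ s ∈ S, (∫ ω, Real.exp (s * Y₀ ω) ∂μ) ≤ Real.exp (φ s))
    (θ : ℝ) (m : ℕ) (s : ℝ) (hs : s ∈ S) :
    μ {ω | ∃ n : ℕ, 1 ≤ n ∧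
        0 ≤ s * ((∑ i ∈ Finset.range n, Y i ω) - m * θ) - φ s * ((n : ℝ) - m)}
      ≤ ENNReal.ofReal (Real.exp (φ s - θ * s) ^ m) := by
  set Z : ℕ → Ω → ℝ := fun i ω => Real.exp (s * Y i ω - φ s)
  have hexp_id (i : ℕ) : IdentDistrib (fun ω => Real.exp (s * Y i ω))
      (fun ω => Real.exp (s * Y₀ ω)) μ μ :=
    (hid i).comp (u := fun y => Real.exp (s * y)) (by fun_prop)
  have hZ_int (i : ℕ) : Integrable (Z i) μ := by
    simpa [Z, Real.exp_sub] using
      ((hexp_id i).integrable_iff.mpr (hint s hs)).div_const (Real.exp (φ s))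
  have hZ_mean (i : ℕ) : μ[Z i] ≤ 1 :=
    integral_exp_mul_sub_le_one ((hexp_id i).integral_eq ▸ hφ s hs)
  have hsup := (hindep.comp (fun _ y => Real.exp (s * y - φ s)) fun _ => by fun_prop)
    |>.supermartingale_prod_range_succ
      (fun i => (by fun_prop : Measurable (Z i)).stronglyMeasurable)
      (fun i ω => (Real.exp_pos _).le) hZ_int hZ_mean
  have hprod (n : ℕ) (ω : Ω) : (∏ i ∈ range (n + 1), Z i) ω
      = Real.exp (s * ∑ i ∈ range (n + 1), Y i ω - (n + 1) * φ s) := by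
    simp [Z, Finset.prod_apply, ← Real.exp_sum, Finset.mul_sum]
  set a := Real.exp (m * (θ * s - φ s))
  calc _ ≤ μ {ω | ∃ k, a ≤ (∏ i ∈ range (k + 1), Z i) ω} := by
        refine measure_mono fun ω ⟨n, hn, hω⟩ => ?_
        obtain ⟨k, rfl⟩ := Nat.exists_eq_add_of_le' hn
        refine ⟨k, (hprod k ω).symm ▸ Real.exp_le_exp.mpr ?_⟩
        push_cast at hω
        linarith
    _ ≤ ENNReal.ofReal (μ[∏ i ∈ range 1, Z i] / a) :=
        hsup.measure_exists_le_le
          (fun n ω => by simpa using prod_nonneg fun i _ => (Real.exp_pos (s * Y i ω - φ s)).le)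
          (Real.exp_pos _)
    _ ≤ ENNReal.ofReal (Real.exp (φ s - θ * s) ^ m) := by
        refine ENNReal.ofReal_le_ofReal ?_
        calc μ[∏ i ∈ range 1, Z i] / a ≤ 1 / a := by
              gcongr
              simpa using hZ_mean 0
          _ = Real.exp (φ s - θ * s) ^ m := by
              rw [← Real.exp_nat_mul, one_div, ← Real.exp_neg]
              ring_nf

/-- Uniform exponential inequality for sums of i.i.d. random variables whose common
moment generating function is bounded by `exp (φ s)`: for every `θ`, `m ≥ 1` and `s ∈ S`,
`Pr{∃ n ≥ 1, s (Xₙ - m θ) - φ(s) (n - m) ≥ 0} ≤ (exp (φ(s) - θ s))^m`, where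
`Xₙ = Y₁ + ⋯ + Yₙ`. -/
theorem statement8 {Ω : Type*} [MeasurableSpace Ω] (μ : Measure Ω) [IsProbabilityMeasure μ]
    (Y₀ : Ω → ℝ) (Y : ℕ → Ω → ℝ) (hY₀m : Measurable Y₀) (hYm : ∀ i, Measurable (Y i))
    (hindep : iIndepFun Y μ)
    (hid : ∀ i, IdentDistrib (Y i) Y₀ μ μ)
    (S : Set ℝ) (φ : ℝ → ℝ)
    (hint : ∀ s ∈ S, Integrable (fun ω => Real.exp (s * Y₀ ω)) μ)
    (hφ : ∀ s ∈ S, (∫ ω, Real.exp (s * Y₀ ω) ∂μ) ≤ Real.exp (φ s))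
    (θ : ℝ) (m : ℕ) (hm : 1 ≤ m) (s : ℝ) (hs : s ∈ S) :
    μ {ω | ∃ n : ℕ, 1 ≤ n ∧
        0 ≤ s * ((∑ i ∈ Finset.range n, Y i ω) - m * θ) - φ s * ((n : ℝ) - m)}
      ≤ ENNReal.ofReal (Real.exp (φ s - θ * s) ^ m) :=
  statement8_general μ Y₀ Y hYm hindep hid S φ hint hφ θ m s hs
end

section
/- Let X₁, X₂, … be independent real random variables with Pr{0 ≤ Xᵢ ≤ 1} = 1 and E[Xᵢ] = μᵢ for i ∈ ℕ. Define Sₙ = Σ_{i=1}^{n} Xᵢ, μ̄ₙ = (1/n) Σ_{i=1}^{n} μᵢ, and 𝒱(s, n) = n·ln(μ̄ₙ e^s + 1 − μ̄ₙ) for s ∈ ℝ, n ∈ ℕ. Let m be a positive integer with 0 < μ̄ₘ < 1 and let θ ∈ (0, 1) with θ ≠ μ̄ₘ or θ = μ̄ₘ (any θ ∈ (0,1)). Set ζ = ln( θ(1 − μ̄ₘ) / (μ̄ₘ(1 − θ)) ). Then Pr{ ∃ n ∈ ℕ, ζ(Sₙ − m θ) − 𝒱(ζ, n) + 𝒱(ζ,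 m) ≥ 0 } ≤ [ exp( θ·ln(μ̄ₘ/θ) + (1 − θ)·ln((1 − μ̄ₘ)/(1 − θ)) ) ]^m. -/
/-!
For `x ∈ [0, 1]`, convexity of `exp` gives `exp (ζ x) ≤ x eᶻ + 1 - x`, so by independence
`fₙ = exp (ζ Sₙ) / ∏_{i<n} (μᵢ eᶻ + 1 - μᵢ)` is a nonnegative supermartingale with `f₀ = 1`.
By AM-GM, `∏_{i<n} (μᵢ eᶻ + 1 - μᵢ) ≤ exp 𝒱(ζ, n)`, so the event is contained in
`{∃ n, fₙ ≥ exp (mθζ - 𝒱(ζ, m))}`, whose probability is at most `exp (𝒱(ζ, m) - mθζ)` by Ville's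
inequality. For the chosen `ζ` this is the stated bound.
-/

open MeasureTheory ProbabilityTheory Finset

lemma exp_mul_le_of_mem_Icc {x : ℝ} (hx : x ∈ Set.Icc (0 : ℝ) 1) (s : ℝ) :
    Real.exp (s * x) ≤ x * Real.exp s + 1 - x := by
  have h := convexOn_exp.2 (Set.mem_univ s) (Set.mem_univ 0) hx.1 (sub_nonneg.2 hx.2) (by ring)
  simp only [smul_eq_mul, mul_zero, add_zero, Real.exp_zero, mul_one] at h
  rw [mul_comm]
  linarith

lemma mul_exp_add_one_sub_pos {p : ℝ} (hp : p ∈ Set.Icc (0 : ℝ) 1) (s : ℝ) :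
    0 < p * Real.exp s + 1 - p := by
  rcases hp.2.lt_or_eq with hp1 | rfl
  · nlinarith [mul_nonneg hp.1 (Real.exp_pos s).le]
  · simpa using Real.exp_pos s

lemma prod_le_pow_mean {ι : Type*} (s : Finset ι) {z : ι → ℝ} (hz : ∀ i ∈ s, 0 ≤ z i) :
    ∏ i ∈ s, z i ≤ ((∑ i ∈ s, z i) / #s) ^ #s := by
  rcases s.eq_empty_or_nonempty with rfl | hs
  · simp
  have hcard : (0 : ℝ) < #s := by exact_mod_cast hs.card_pos
  have h := Real.geom_mean_le_arith_mean s (fun _ => 1) z (fun _ _ => zero_le_one)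
    (by simpa using hcard) hz
  simp only [Real.rpow_one, sum_const, nsmul_eq_mul, mul_one, one_mul] at h
  calc ∏ i ∈ s, z i = ((∏ i ∈ s, z i) ^ (#s : ℝ)⁻¹) ^ #s := by
        rw [← Real.rpow_natCast, ← Real.rpow_mul (prod_nonneg hz), inv_mul_cancel₀ hcard.ne',
          Real.rpow_one]
    _ ≤ ((∑ i ∈ s, z i) / #s) ^ #s :=
        pow_le_pow_left₀ (Real.rpow_nonneg (prod_nonneg hz) _) h _

lemma prod_mul_exp_add_one_sub_le_exp {μ : ℕ → ℝ} (hμ : ∀ i, μ i ∈ Set.Icc (0 : ℝ) 1) (ζ : ℝ)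
    {n : ℕ} (hn : 1 ≤ n) :
    ∏ i ∈ range n, (μ i * Real.exp ζ + 1 - μ i) ≤ Real.exp (n * Real.log
      ((∑ i ∈ range n, μ i) / n * Real.exp ζ + 1 - (∑ i ∈ range n, μ i) / n)) := by
  have hn0 : (0 : ℝ) < n := by exact_mod_cast hn
  have hmean : (∑ i ∈ range n, (μ i * Real.exp ζ + 1 - μ i)) / #(range n)
      = (∑ i ∈ range n, μ i) / n * Real.exp ζ + 1 - (∑ i ∈ range n, μ i) / n := by
    rw [sum_sub_distrib, sum_add_distrib, ← sum_mul, sum_const, card_range, nsmul_eq_mul]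
    field_simp
  have hpos : 0 < (∑ i ∈ range n, μ i) / n * Real.exp ζ + 1 - (∑ i ∈ range n, μ i) / n := by
    rw [← hmean]
    exact div_pos (sum_pos (fun i _ => mul_exp_add_one_sub_pos (hμ i) ζ) (nonempty_range_iff.2
      (by omega))) (by simpa using hn0)
  rw [Real.exp_nat_mul, Real.exp_log hpos, ← hmean]
  simpa using prod_le_pow_mean (range n) fun i _ => (mul_exp_add_one_sub_pos (hμ i) ζ).le

/-- `ζ` is the optimal Chernoff parameter for a Bernoulli(`p`) mean exceeding `θ`; the right-hand
side is `-KL(θ ‖ p)`. -/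
lemma log_mul_exp_add_one_sub_sub_mul_eq {p θ ζ : ℝ} (hp : p ∈ Set.Ioo (0 : ℝ) 1)
    (hθ : θ ∈ Set.Ioo (0 : ℝ) 1) (hζ : ζ = Real.log (θ * (1 - p) / (p * (1 - θ)))) :
    Real.log (p * Real.exp ζ + 1 - p) - θ * ζ
      = θ * Real.log (p / θ) + (1 - θ) * Real.log ((1 - p) / (1 - θ)) := by
  obtain ⟨hp0, hp1⟩ := hp
  obtain ⟨hθ0, hθ1⟩ := hθ
  have hp1' : 0 < 1 - p := sub_pos.2 hp1
  have hθ1' : 0 < 1 - θ := sub_pos.2 hθ1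
  have hmgf : p * Real.exp ζ + 1 - p = (1 - p) / (1 - θ) := by
    rw [hζ, Real.exp_log (by positivity)]
    field_simp
    ring
  rw [hmgf, hζ, Real.log_div (mul_pos hθ0 hp1').ne' (mul_pos hp0 hθ1').ne',
    Real.log_mul hθ0.ne' hp1'.ne', Real.log_mul hp0.ne' hθ1'.ne', Real.log_div hp0.ne' hθ0.ne',
    Real.log_div hp1'.ne' hθ1'.ne']
  ring

section Ville

variable {Ω : Type*} {f : ℕ → Ω → ℝ} {l : ℝ}

def belowBefore (f : ℕ → Ω → ℝ) (l : ℝ) (N : ℕ) : Set Ω := {ω | ∀ k < N, f k ω < l}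

lemma belowBefore_zero : belowBefore f l 0 = Set.univ := by
  simp [belowBefore]

lemma belowBefore_succ (N : ℕ) :
    belowBefore f l (N + 1) = belowBefore f l N ∩ {ω | f N ω < l} := by
  ext ω
  simp [belowBefore, le_iff_lt_or_eq, or_imp, forall_and]

lemma antitone_belowBefore : Antitone (belowBefore f l) :=
  fun _ _ hNM _ hω k hk => hω k (hk.trans_le hNM)

lemma measurableSet_belowBefore {m : MeasurableSpace Ω} {N : ℕ}
    (hf : ∀ k < N, Measurable (f k)) :
    MeasurableSet (belowBefore f l N) := by
  induction N with
  | zero => simp [belowBefore_zero]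
  | succ N ih =>
    rw [belowBefore_succ]
    exact (ih fun k hk => hf k (hk.trans N.lt_succ_self)).inter
      (measurableSet_lt (hf N N.lt_succ_self) measurable_const)

variable [MeasurableSpace Ω] {P : Measure Ω} [IsFiniteMeasure P]

lemma mul_measureReal_compl_belowBefore_add_setIntegral_le (hf : ∀ n, Measurable (f n))
    (hint : ∀ n, Integrable (f n) P)
    (hsuper : ∀ N, ∫ ω in belowBefore f l (N + 1), f (N + 1) ω ∂P
      ≤ ∫ ω in belowBefore f l (N + 1), f N ω ∂P) (N : ℕ) :
    l * P.real (belowBefore f l N)ᶜ + ∫ ω in belowBefore f l N, f N ω ∂P ≤ ∫ ω, f 0 ω ∂P := by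
  induction N with
  | zero => simp [belowBefore_zero]
  | succ N ih =>
    have hstep := hsuper N
    set B := belowBefore f l N
    set B' := belowBefore f l (N + 1)
    have hB : MeasurableSet B := measurableSet_belowBefore fun k _ => hf k
    have hB' : MeasurableSet B' := measurableSet_belowBefore fun k _ => hf k
    have hB'B : B' ⊆ B := antitone_belowBefore N.le_succ
    have hcompl : P.real B'ᶜ = P.real Bᶜ + P.real (B \ B') := by
      rw [← measureReal_union (disjoint_compl_left.mono_right Set.sdiff_subset) (hB.diff hB')]
      congr 1
      ext ω
      have := @hB'B ω
      simp only [Set.mem_compl_iff, Set.mem_union, Set.mem_sdiff]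
      tauto
    have hcrossed : l * P.real (B \ B') ≤ ∫ ω in B \ B', f N ω ∂P := by
      refine setIntegral_ge_of_const_le_real (hB.diff hB') (measure_ne_top _ _)
        (fun ω hω => ?_) (hint N).integrableOn
      have : ω ∉ B ∩ {ω | f N ω < l} := by rw [← belowBefore_succ]; exact hω.2
      simpa [hω.1] using this
    have hsplit : ∫ ω in B, f N ω ∂P = ∫ ω in B', f N ω ∂P + ∫ ω in B \ B', f N ω ∂P := by
      rw [setIntegral_sdiff hB' (hint N).integrableOn hB'B]
      ring
    rw [hcompl, mul_add]
    linarith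

/-- **Ville's inequality**, for a process that is a supermartingale along the event of not yet
having crossed the level `l`. -/
theorem measure_exists_le_le_ofReal_integral_div (hf : ∀ n, Measurable (f n))
    (hint : ∀ n, Integrable (f n) P) (hnonneg : ∀ n, 0 ≤ f n) (hl : 0 < l)
    (hsuper : ∀ N, ∫ ω in belowBefore f l (N + 1), f (N + 1) ω ∂P
      ≤ ∫ ω in belowBefore f l (N + 1), f N ω ∂P) :
    P {ω | ∃ n, l ≤ f n ω} ≤ ENNReal.ofReal ((∫ ω, f 0 ω ∂P) / l) := by
  have hunion : {ω | ∃ n, l ≤ f n ω} = ⋃ N, (belowBefore f l N)ᶜ := by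
    ext ω
    simp only [belowBefore, Set.mem_iUnion, Set.mem_compl_iff, Set.mem_ofPred_eq, not_forall,
      not_lt]
    exact ⟨fun ⟨n, hn⟩ => ⟨n + 1, n, n.lt_succ_self, hn⟩, fun ⟨_, n, _, hn⟩ => ⟨n, hn⟩⟩
  have hmono : Monotone fun N => (belowBefore f l N)ᶜ :=
    fun _ _ hNM => compl_le_compl (antitone_belowBefore hNM)
  rw [hunion, hmono.measure_iUnion]
  refine iSup_le fun N => ?_
  rw [← ofReal_measureReal]
  refine ENNReal.ofReal_le_ofReal ((le_div_iff₀' hl).2 ?_)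
  have hbelow : 0 ≤ ∫ ω in belowBefore f l N, f N ω ∂P :=
    setIntegral_nonneg (measurableSet_belowBefore fun k _ => hf k) fun ω _ => hnonneg N ω
  linarith [mul_measureReal_compl_belowBefore_add_setIntegral_le hf hint hsuper N]

end Ville

lemma setIntegral_mul_le_of_indep {Ω : Type*} [mΩ : MeasurableSpace Ω] {P : Measure Ω}
    {m₁ m₂ : MeasurableSpace Ω} (hm₁ : m₁ ≤ mΩ) (hm₂ : m₂ ≤ mΩ) (hind : Indep m₁ m₂ P)
    {s : Set Ω} (hs : MeasurableSet[m₁] s) {Z G : Ω → ℝ} (hZ : Measurable[m₁] Z)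
    (hG : Measurable[m₂] G) (hZ0 : ∀ ω ∈ s, 0 ≤ Z ω) (hG1 : ∫ ω, G ω ∂P ≤ 1) :
    ∫ ω in s, Z ω * G ω ∂P ≤ ∫ ω in s, Z ω ∂P := by
  have hZs : Measurable[m₁] (s.indicator Z) := hZ.indicator hs
  have hindep : IndepFun (s.indicator Z) G P := by
    rw [IndepFun_iff_Indep]
    exact indep_of_indep_of_le_left (indep_of_indep_of_le_right hind hG.comap_le) hZs.comap_le
  have hZs_nonneg : 0 ≤ ∫ ω, s.indicator Z ω ∂P :=
    integral_nonneg (Set.indicator_nonneg hZ0)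
  calc ∫ ω in s, Z ω * G ω ∂P = ∫ ω, (s.indicator Z * G) ω ∂P := by
        rw [← integral_indicator (hm₁ _ hs)]
        simp only [Pi.mul_apply, Set.indicator_mul_left]
    _ = (∫ ω, s.indicator Z ω ∂P) * ∫ ω, G ω ∂P :=
        hindep.integral_mul_eq_mul_integral (hZs.mono hm₁ le_rfl).aestronglyMeasurable
          (hG.mono hm₂ le_rfl).aestronglyMeasurable
    _ ≤ ∫ ω, s.indicator Z ω ∂P := mul_le_of_le_one_right hZs_nonneg hG1
    _ = ∫ ω in s, Z ω ∂P := integral_indicator (hm₁ _ hs)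

section Past

variable {Ω : Type*} (X : ℕ → Ω → ℝ)

abbrev sigmaBefore (N : ℕ) : MeasurableSpace Ω :=
  ⨆ i ∈ Set.Iio N, MeasurableSpace.comap (X i) inferInstance

variable {X}

lemma measurable_sigmaBefore {i N : ℕ} (hi : i < N) : Measurable[sigmaBefore X N] (X i) :=
  Measurable.of_comap_le
    (le_iSup₂ (f := fun j (_ : j ∈ Set.Iio N) => MeasurableSpace.comap (X j) inferInstance) i hi)

variable [mΩ : MeasurableSpace Ω]

lemma sigmaBefore_le (hX : ∀ i, Measurable (X i)) (N : ℕ) : sigmaBefore X N ≤ mΩ :=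
  iSup₂_le fun i _ => (hX i).comap_le

lemma indep_sigmaBefore_comap {P : Measure Ω} (hX : ∀ i, Measurable (X i)) (hind : iIndepFun X P)
    (N : ℕ) : Indep (sigmaBefore X N) (MeasurableSpace.comap (X N) inferInstance) P := by
  simpa [sigmaBefore] using indep_iSup_of_disjoint (fun i => (hX i).comap_le)
    ((iIndepFun_iff_iIndep _ _ _).1 hind) (S := Set.Iio N) (T := {N}) (by simp)

end Past

section Probability

variable {Ω : Type*} [MeasurableSpace Ω] {P : Measure Ω} [IsProbabilityMeasure P]

lemma integral_mem_Icc_of_ae_mem_Icc {Y : Ω → ℝ} (hY : ∀ᵐ ω ∂P, Y ω ∈ Set.Icc (0 : ℝ) 1) :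
    ∫ ω, Y ω ∂P ∈ Set.Icc (0 : ℝ) 1 :=
  ⟨integral_nonneg_of_ae (hY.mono fun _ h => h.1), by
    simpa using integral_mono_of_nonneg (hY.mono fun _ h => h.1) (integrable_const (1 : ℝ))
      (hY.mono fun _ h => h.2)⟩

lemma integrable_of_ae_mem_Icc {Y : Ω → ℝ} (hYm : AEStronglyMeasurable Y P)
    (hY : ∀ᵐ ω ∂P, Y ω ∈ Set.Icc (0 : ℝ) 1) : Integrable Y P :=
  Integrable.of_bound hYm 1 <| hY.mono fun _ h => by
    rw [Real.norm_eq_abs, abs_le]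
    constructor <;> linarith [h.1, h.2]

lemma integral_exp_mul_le {Y : Ω → ℝ} (hYm : AEStronglyMeasurable Y P)
    (hY : ∀ᵐ ω ∂P, Y ω ∈ Set.Icc (0 : ℝ) 1) (s : ℝ) :
    ∫ ω, Real.exp (s * Y ω) ∂P ≤ (∫ ω, Y ω ∂P) * Real.exp s + 1 - ∫ ω, Y ω ∂P := by
  have hYint := integrable_of_ae_mem_Icc hYm hY
  have haff : Integrable (fun ω => Y ω * Real.exp s + 1) P :=
    (hYint.mul_const _).add (integrable_const 1)
  calc ∫ ω, Real.exp (s * Y ω) ∂P ≤ ∫ ω, (Y ω * Real.exp s + 1 - Y ω) ∂P :=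
        integral_mono_of_nonneg (ae_of_all _ fun _ => (Real.exp_pos _).le)
          (haff.sub hYint)
          (hY.mono fun _ h => exp_mul_le_of_mem_Icc h s)
    _ = (∫ ω, Y ω ∂P) * Real.exp s + 1 - ∫ ω, Y ω ∂P := by
        rw [integral_sub haff hYint,
          integral_add (hYint.mul_const _) (integrable_const 1), integral_mul_const]
        simp

end Probability

section HoeffdingProcess

variable {Ω : Type*} (X : ℕ → Ω → ℝ) (μ : ℕ → ℝ) (ζ : ℝ)

noncomputable def hoeffdingProcess (n : ℕ) (ω : Ω) : ℝ :=
  Real.exp (ζ * ∑ i ∈ range n, X i ω) / ∏ i ∈ range n, (μ i * Real.exp ζ + 1 - μ i)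

lemma hoeffdingProcess_zero : hoeffdingProcess X μ ζ 0 = 1 := by
  ext ω
  simp [hoeffdingProcess]

lemma hoeffdingProcess_succ (n : ℕ) (ω : Ω) :
    hoeffdingProcess X μ ζ (n + 1) ω =
      hoeffdingProcess X μ ζ n ω * (Real.exp (ζ * X n ω) / (μ n * Real.exp ζ + 1 - μ n)) := by
  simp only [hoeffdingProcess, sum_range_succ, prod_range_succ, mul_add, Real.exp_add,
    div_mul_div_comm]

variable {X μ ζ}

lemma hoeffdingProcess_nonneg (hμ : ∀ i, μ i ∈ Set.Icc (0 : ℝ) 1) (n : ℕ) :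
    0 ≤ hoeffdingProcess X μ ζ n :=
  fun _ => div_nonneg (Real.exp_pos _).le
    (prod_nonneg fun i _ => (mul_exp_add_one_sub_pos (hμ i) ζ).le)

lemma measurable_hoeffdingProcess {m : MeasurableSpace Ω} {n : ℕ}
    (hX : ∀ i < n, Measurable (X i)) : Measurable (hoeffdingProcess X μ ζ n) :=
  ((Finset.measurable_sum _ fun i hi => hX i (mem_range.1 hi)).const_mul ζ).exp.div_const _

lemma integrable_hoeffdingProcess [MeasurableSpace Ω] {P : Measure Ω} [IsFiniteMeasure P]
    (hX : ∀ i, Measurable (X i)) (hbd : ∀ i, ∀ᵐ ω ∂P, X i ω ∈ Set.Icc (0 : ℝ) 1) (n : ℕ) :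
    Integrable (hoeffdingProcess X μ ζ n) P := by
  refine Integrable.of_bound (measurable_hoeffdingProcess fun i _ => hX i).aestronglyMeasurable
    (Real.exp (|ζ| * n) / ‖∏ i ∈ range n, (μ i * Real.exp ζ + 1 - μ i)‖) ?_
  filter_upwards [ae_all_iff.2 hbd] with ω hω
  rw [hoeffdingProcess, norm_div, Real.norm_of_nonneg (Real.exp_pos _).le]
  refine div_le_div_of_nonneg_right (Real.exp_le_exp.2 ?_) (norm_nonneg _)
  calc ζ * ∑ i ∈ range n, X i ω = ∑ i ∈ range n, ζ * X i ω := mul_sum _ _ _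
    _ ≤ ∑ _i ∈ range n, |ζ| := sum_le_sum fun i _ => (le_abs_self _).trans <| by
        rw [abs_mul]
        exact mul_le_of_le_one_right (abs_nonneg ζ) (abs_le.2 ⟨by linarith [(hω i).1], (hω i).2⟩)
    _ = |ζ| * n := by simp [mul_comm]

lemma setIntegral_hoeffdingProcess_succ_le [MeasurableSpace Ω] {P : Measure Ω}
    [IsProbabilityMeasure P] (hX : ∀ i, Measurable (X i)) (hind : iIndepFun X P)
    (hbd : ∀ i, ∀ᵐ ω ∂P, X i ω ∈ Set.Icc (0 : ℝ) 1) (hmean : ∀ i, ∫ ω, X i ω ∂P = μ i)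
    {N : ℕ} {s : Set Ω} (hs : MeasurableSet[sigmaBefore X N] s) :
    ∫ ω in s, hoeffdingProcess X μ ζ (N + 1) ω ∂P ≤ ∫ ω in s, hoeffdingProcess X μ ζ N ω ∂P := by
  have hμ : ∀ i, μ i ∈ Set.Icc (0 : ℝ) 1 :=
    fun i => hmean i ▸ integral_mem_Icc_of_ae_mem_Icc (hbd i)
  have hfactor : ∫ ω, Real.exp (ζ * X N ω) / (μ N * Real.exp ζ + 1 - μ N) ∂P ≤ 1 := by
    rw [integral_div, div_le_one (mul_exp_add_one_sub_pos (hμ N) ζ), ← hmean N]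
    exact integral_exp_mul_le (hX N).aestronglyMeasurable (hbd N) ζ
  simp only [hoeffdingProcess_succ]
  exact setIntegral_mul_le_of_indep (sigmaBefore_le hX N) (hX N).comap_le
    (indep_sigmaBefore_comap hX hind N) hs
    (measurable_hoeffdingProcess fun i hi => measurable_sigmaBefore hi)
    (((comap_measurable (X N)).const_mul ζ).exp.div_const _)
    (fun ω _ => hoeffdingProcess_nonneg hμ N ω) hfactor

end HoeffdingProcess

theorem statement9_general {Ω : Type*} [MeasurableSpace Ω] (P : Measure Ω) [IsProbabilityMeasure P]
    (X : ℕ → Ω → ℝ) (hXm : ∀ i, Measurable (X i))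
    (hindep : iIndepFun X P)
    (hbd : ∀ i, ∀ᵐ ω ∂P, X i ω ∈ Set.Icc (0 : ℝ) 1)
    (μ : ℕ → ℝ) (hmean : ∀ i, (∫ ω, X i ω ∂P) = μ i)
    (μbar : ℕ → ℝ) (hμbar : ∀ n, μbar n = (∑ i ∈ Finset.range n, μ i) / n)
    (V : ℝ → ℕ → ℝ)
    (hV : ∀ s n, V s n = n * Real.log (μbar n * Real.exp s + 1 - μbar n))
    (m : ℕ) (hμm : μbar m ∈ Set.Ioo (0 : ℝ) 1)
    (θ : ℝ) (hθ : θ ∈ Set.Ioo (0 : ℝ) 1)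
    (ζ : ℝ) (hζ : ζ = Real.log (θ * (1 - μbar m) / (μbar m * (1 - θ)))) :
    P {ω | ∃ n : ℕ, 1 ≤ n ∧
        0 ≤ ζ * ((∑ i ∈ Finset.range n, X i ω) - m * θ) - V ζ n + V ζ m}
      ≤ ENNReal.ofReal
        ((Real.exp (θ * Real.log (μbar m / θ)
            + (1 - θ) * Real.log ((1 - μbar m) / (1 - θ)))) ^ m) := by
  have hμ : ∀ i, μ i ∈ Set.Icc (0 : ℝ) 1 :=
    fun i => hmean i ▸ integral_mem_Icc_of_ae_mem_Icc (hbd i)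
  set f := hoeffdingProcess X μ ζ
  set l := Real.exp (m * θ * ζ - V ζ m)
  have hsuper : ∀ N, ∫ ω in belowBefore f l (N + 1), f (N + 1) ω ∂P
      ≤ ∫ ω in belowBefore f l (N + 1), f N ω ∂P := fun N =>
    setIntegral_hoeffdingProcess_succ_le hXm hindep hbd hmean <|
      measurableSet_belowBefore fun _ hk => measurable_hoeffdingProcess fun _ hi =>
        measurable_sigmaBefore (hi.trans_le (Nat.lt_succ_iff.1 hk))
  have hville : P {ω | ∃ n, l ≤ f n ω} ≤ ENNReal.ofReal ((∫ ω, f 0 ω ∂P) / l) :=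
    measure_exists_le_le_ofReal_integral_div (fun _ => measurable_hoeffdingProcess fun i _ => hXm i)
      (integrable_hoeffdingProcess hXm hbd) (hoeffdingProcess_nonneg hμ) (Real.exp_pos _) hsuper
  have hevent : {ω | ∃ n : ℕ, 1 ≤ n ∧
      0 ≤ ζ * ((∑ i ∈ Finset.range n, X i ω) - m * θ) - V ζ n + V ζ m}
      ⊆ {ω | ∃ n, l ≤ f n ω} := by
    rintro ω ⟨n, hn, hω⟩
    refine ⟨n, ?_⟩
    calc l ≤ Real.exp (ζ * ∑ i ∈ range n, X i ω - V ζ n) := Real.exp_le_exp.2 (by linarith)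
      _ = Real.exp (ζ * ∑ i ∈ range n, X i ω) / Real.exp (V ζ n) := Real.exp_sub _ _
      _ ≤ f n ω := div_le_div_of_nonneg_left (Real.exp_pos _).le
          (prod_pos fun i _ => mul_exp_add_one_sub_pos (hμ i) ζ)
          (by simpa only [hV, hμbar] using prod_mul_exp_add_one_sub_le_exp hμ ζ hn)
  have hbound : Real.exp (θ * Real.log (μbar m / θ)
      + (1 - θ) * Real.log ((1 - μbar m) / (1 - θ))) ^ m = (∫ ω, f 0 ω ∂P) / l := by
    have hf0 : ∫ ω, f 0 ω ∂P = 1 := by simp [f, hoeffdingProcess_zero]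
    rw [← log_mul_exp_add_one_sub_sub_mul_eq hμm hθ hζ, ← Real.exp_nat_mul, hf0, one_div,
      ← Real.exp_neg, hV]
    congr 1
    ring
  calc _ ≤ P {ω | ∃ n, l ≤ f n ω} := measure_mono hevent
    _ ≤ _ := hville
    _ = _ := by rw [hbound]

/-- Uniform Hoeffding-type inequality for independent `[0,1]`-valued random variables
with means `μᵢ`: with `μ̄ₙ = (1/n) ∑_{i≤n} μᵢ`, `𝒱(s,n) = n log(μ̄ₙ eˢ + 1 - μ̄ₙ)`,
`ζ = log (θ(1-μ̄ₘ)/(μ̄ₘ(1-θ)))`, we have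
`Pr{∃ n ≥ 1, ζ(Sₙ - mθ) - 𝒱(ζ,n) + 𝒱(ζ,m) ≥ 0}
  ≤ (exp (θ log (μ̄ₘ/θ) + (1-θ) log ((1-μ̄ₘ)/(1-θ))))^m`. -/
theorem statement9 {Ω : Type*} [MeasurableSpace Ω] (P : Measure Ω) [IsProbabilityMeasure P]
    (X : ℕ → Ω → ℝ) (hXm : ∀ i, Measurable (X i))
    (hindep : iIndepFun X P)
    (hbd : ∀ i, ∀ᵐ ω ∂P, X i ω ∈ Set.Icc (0 : ℝ) 1)
    (μ : ℕ → ℝ) (hmean : ∀ i, (∫ ω, X i ω ∂P) = μ i)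
    (μbar : ℕ → ℝ) (hμbar : ∀ n, μbar n = (∑ i ∈ Finset.range n, μ i) / n)
    (V : ℝ → ℕ → ℝ)
    (hV : ∀ s n, V s n = n * Real.log (μbar n * Real.exp s + 1 - μbar n))
    (m : ℕ) (hm : 1 ≤ m) (hμm : μbar m ∈ Set.Ioo (0 : ℝ) 1)
    (θ : ℝ) (hθ : θ ∈ Set.Ioo (0 : ℝ) 1)
    (ζ : ℝ) (hζ : ζ = Real.log (θ * (1 - μbar m) / (μbar m * (1 - θ)))) :
    P {ω | ∃ n : ℕ, 1 ≤ n ∧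
        0 ≤ ζ * ((∑ i ∈ Finset.range n, X i ω) - m * θ) - V ζ n + V ζ m}
      ≤ ENNReal.ofReal
        ((Real.exp (θ * Real.log (μbar m / θ)
            + (1 - θ) * Real.log ((1 - μbar m) / (1 - θ)))) ^ m) :=
  statement9_general P X hXm hindep hbd μ hmean μbar hμbar V hV m hμm θ hθ ζ hζ
end

section
/- Let X₁, X₂, … be independent real random variables such that Xᵢ has the normal (Gaussian) distribution with mean μᵢ and variance νᵢ > 0 for each i ∈ ℕ. Define Sₙ = Σ_{i=1}^{n} Xᵢ, μ̄ₙ = (1/n) Σ_{i=1}^{n} μᵢ, ν̄ₙ = (1/n) Σ_{i=1}^{n} νᵢ, and 𝒱(s, n) = n(μ̄ₙ s + ν̄ₙ s²/2) for s ∈ ℝ, n ∈ ℕ. Then for every positive integer m and every θ ∈ ℝ, with ζ = (θ − μ̄ₘ)/ν̄ₘ: Pr{ ∃ n ∈ ℕ, ζ(Sₙ − m θ) − 𝒱(ζ, n) + 𝒱(ζ, m) ≥ 0 } ≤ [ exp( −(θ − μ̄ₘ)²/(2 ν̄ₘ) ) ]^m. -/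
/-!
For fixed `ζ`, the factors `exp (ζ Xᵢ - (μᵢ ζ + νᵢ ζ² / 2))` are independent, nonnegative and of
mean one (Gaussian moment generating function), so their partial products
`exp (ζ Sₙ - 𝒱(ζ, n))` form a nonnegative martingale started at mean one. Ville's maximal
inequality bounds the probability that it ever reaches `exp K` by `exp (-K)`, and the event of the
theorem is exactly this one with `K = ζ m θ - 𝒱(ζ, m)`. For `ζ = (θ - μ̄ₘ) / ν̄ₘ` one computes
`K = m (θ - μ̄ₘ)² / (2 ν̄ₘ)`.
-/

open MeasureTheory ProbabilityTheory Finset Real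
open scoped NNReal ENNReal

section

variable {Ω : Type*} {m0 : MeasurableSpace Ω} {μ : Measure Ω}

theorem MeasureTheory.Martingale.ville_ineq [IsFiniteMeasure μ] {F : ℕ → Ω → ℝ}
    {ℱ : Filtration ℕ m0} (hF : Martingale F ℱ μ) (hnonneg : 0 ≤ F) (ε : ℝ≥0) :
    ε * μ {ω | ∃ n, (ε : ℝ) ≤ F n ω} ≤ ENNReal.ofReal (μ[F 0]) := by
  set A : ℕ → Set Ω := fun N =>
    {ω | (ε : ℝ) ≤ (range (N + 1)).sup' nonempty_range_add_one fun k => F k ω}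
  have hA : {ω | ∃ n, (ε : ℝ) ≤ F n ω} = ⋃ N, A N := by
    ext ω
    simp only [A, Set.mem_ofPred_eq, Set.mem_iUnion, le_sup'_iff, mem_range]
    exact ⟨fun ⟨n, hn⟩ => ⟨n, n, n.lt_succ_self, hn⟩, fun ⟨_, n, _, hn⟩ => ⟨n, hn⟩⟩
  have hA_mono : Monotone A := fun a b hab ω (hω : (ε : ℝ) ≤ _) =>
    show (ε : ℝ) ≤ _ from hω.trans (sup'_mono _ (range_subset_range.mpr (by omega)) _)
  rw [hA, hA_mono.measure_iUnion, ENNReal.mul_iSup]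
  refine iSup_le fun N => (maximal_ineq hF.submartingale hnonneg N).trans ?_
  have hint_eq : μ[F N] = μ[F 0] := by
    rw [← integral_condExp (ℱ.le 0)]
    exact integral_congr_ae (hF.condExp_ae_eq (Nat.zero_le N))
  rw [← hint_eq]
  exact ENNReal.ofReal_le_ofReal
    (setIntegral_le_integral (hF.integrable N) (.of_forall fun ω => hnonneg N ω))

namespace ProbabilityTheory

theorem iIndepFun.integrable_prod_range {Y : ℕ → Ω → ℝ} (hY : ∀ i, Measurable (Y i))
    (hindep : iIndepFun Y μ) (hint : ∀ i, Integrable (Y i) μ) (n : ℕ) :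
    Integrable (∏ i ∈ range n, Y i) μ := by
  induction n with
  | zero =>
    have := hindep.isProbabilityMeasure
    rw [prod_range_zero]
    exact integrable_const 1
  | succ n ih =>
    rw [prod_range_succ]
    exact (hindep.indepFun_prod_range_succ hY n).integrable_mul ih (hint n)

theorem iIndepFun.indep_comap_natural_s11 {Y : ℕ → Ω → ℝ} (hY : ∀ i, StronglyMeasurable (Y i))
    (hindep : iIndepFun Y μ) {i n : ℕ} (hin : n < i) :
    Indep (MeasurableSpace.comap (Y i) inferInstance) (Filtration.natural Y hY n) μ := by
  have hdisj : Disjoint {j : ℕ | j ≤ n} {i} := by simpa using hin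
  have := indep_iSup_of_disjoint (fun j => (hY j).measurable.comap_le) hindep hdisj
  simp only [Set.mem_singleton_iff, iSup_iSup_eq_left] at this
  exact this.symm

theorem iIndepFun.martingale_prod_range_succ {Y : ℕ → Ω → ℝ} (hY : ∀ i, StronglyMeasurable (Y i))
    (hindep : iIndepFun Y μ) (hint : ∀ i, Integrable (Y i) μ) (hmean : ∀ i, μ[Y i] = 1) :
    Martingale (fun n => ∏ i ∈ range (n + 1), Y i) (Filtration.natural Y hY) μ := by
  have := hindep.isProbabilityMeasure
  have hYm i := (hY i).measurable
  have hadapted : StronglyAdapted (Filtration.natural Y hY) fun n => ∏ i ∈ range (n + 1), Y i :=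
    fun n => Finset.stronglyMeasurable_prod _ fun i hi =>
      ((Filtration.stronglyAdapted_natural hY i).mono
        (Filtration.mono _ (Nat.lt_succ_iff.mp (mem_range.mp hi))))
  refine martingale_nat hadapted (fun n => hindep.integrable_prod_range hYm hint _) fun n => ?_
  have hcomap_le := (hYm (n + 1)).comap_le
  have hY_comap : StronglyMeasurable[MeasurableSpace.comap (Y (n + 1)) inferInstance] (Y (n + 1)) :=
    (comap_measurable (Y (n + 1))).stronglyMeasurable
  have hcond_Y := condExp_indep_eq hcomap_le ((Filtration.natural Y hY).le n) hY_comap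
    (hindep.indep_comap_natural_s11 hY n.lt_succ_self)
  have hcond_prod := condExp_mul_of_stronglyMeasurable_left (m := Filtration.natural Y hY n)
    (hadapted n) (by simpa [← prod_range_succ] using hindep.integrable_prod_range hYm hint (n + 2))
    (hint (n + 1))
  rw [prod_range_succ _ (n + 1)]
  filter_upwards [hcond_prod, hcond_Y] with ω hprod hY'
  rw [hprod, Pi.mul_apply, hY', hmean, mul_one]

theorem iIndepFun.mul_measure_exists_le_prod_le_one {Y : ℕ → Ω → ℝ} (hY : ∀ i, Measurable (Y i))
    (hindep : iIndepFun Y μ) (hnonneg : ∀ i ω, 0 ≤ Y i ω) (hint : ∀ i, Integrable (Y i) μ)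
    (hmean : ∀ i, μ[Y i] = 1) (ε : ℝ≥0) :
    ε * μ {ω | ∃ n, (ε : ℝ) ≤ ∏ i ∈ range (n + 1), Y i ω} ≤ 1 := by
  have := hindep.isProbabilityMeasure
  have hville := (hindep.martingale_prod_range_succ (fun i => (hY i).stronglyMeasurable) hint
    hmean).ville_ineq (fun n ω => by simpa [prod_apply] using prod_nonneg fun i _ => hnonneg i ω) ε
  simpa [prod_apply, hmean] using hville

theorem integrable_exp_mul_sub_of_map_eq_gaussianReal {X : Ω → ℝ} {m : ℝ} {v : ℝ≥0}
    (hX : μ.map X = gaussianReal m v) (t : ℝ) :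
    Integrable (fun ω => exp (t * X ω - (m * t + v * t ^ 2 / 2))) μ := by
  have : NeZero μ := ⟨fun h => by simp [h] at hX; exact IsProbabilityMeasure.ne_zero _ hX.symm⟩
  simp_rw [exp_sub]
  exact (mgf_pos_iff.mp (mgf_gaussianReal hX t ▸ exp_pos _)).div_const _

theorem integral_exp_mul_sub_of_map_eq_gaussianReal {X : Ω → ℝ} {m : ℝ} {v : ℝ≥0}
    (hX : μ.map X = gaussianReal m v) (t : ℝ) :
    ∫ ω, exp (t * X ω - (m * t + v * t ^ 2 / 2)) ∂μ = 1 := by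
  simp_rw [exp_sub]
  rw [integral_div, ← mgf, mgf_gaussianReal hX t, div_self (exp_pos _).ne']

end ProbabilityTheory

end

theorem natCast_mul_average_add_average (a b : ℕ → ℝ) (s : ℝ) (n : ℕ) :
    n * ((∑ i ∈ range n, a i) / n * s + (∑ i ∈ range n, b i) / n * s ^ 2 / 2) =
      ∑ i ∈ range n, (a i * s + b i * s ^ 2 / 2) := by
  rcases n.eq_zero_or_pos with rfl | hn
  · simp
  rw [sum_add_distrib, ← sum_mul, ← sum_div, ← sum_mul]
  field_simp

theorem tilt_exponent_eq (a b θ x : ℝ) :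
    (θ - a) / b * (x * θ) - x * (a * ((θ - a) / b) + b * ((θ - a) / b) ^ 2 / 2) =
      x * ((θ - a) ^ 2 / (2 * b)) := by
  rcases eq_or_ne b 0 with rfl | hb
  · simp
  field_simp
  ring

theorem statement11_general {Ω : Type*} [MeasurableSpace Ω] (P : Measure Ω) [IsProbabilityMeasure P]
    (X : ℕ → Ω → ℝ) (hXm : ∀ i, Measurable (X i))
    (hindep : iIndepFun X P)
    (μ : ℕ → ℝ) (v : ℕ → NNReal)
    (hdist : ∀ i, Measure.map (X i) P = gaussianReal (μ i) (v i))
    (μbar : ℕ → ℝ) (hμbar : ∀ n, μbar n = (∑ i ∈ Finset.range n, μ i) / n)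
    (νbar : ℕ → ℝ) (hνbar : ∀ n, νbar n = (∑ i ∈ Finset.range n, (v i : ℝ)) / n)
    (V : ℝ → ℕ → ℝ)
    (hV : ∀ s n, V s n = n * (μbar n * s + νbar n * s ^ 2 / 2))
    (m : ℕ) (θ : ℝ)
    (ζ : ℝ) (hζ : ζ = (θ - μbar m) / νbar m) :
    P {ω | ∃ n : ℕ, 1 ≤ n ∧
        0 ≤ ζ * ((∑ i ∈ Finset.range n, X i ω) - m * θ) - V ζ n + V ζ m}
      ≤ ENNReal.ofReal ((Real.exp (-(θ - μbar m) ^ 2 / (2 * νbar m))) ^ m) := by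
  set c : ℕ → ℝ := fun i => μ i * ζ + v i * ζ ^ 2 / 2
  have hV_sum (n : ℕ) : V ζ n = ∑ i ∈ range n, c i := by
    rw [hV, hμbar, hνbar, natCast_mul_average_add_average]
  set K := ζ * (m * θ) - V ζ m with hK_def
  have hK : K = m * ((θ - μbar m) ^ 2 / (2 * νbar m)) := by
    rw [hK_def, hV, hζ, tilt_exponent_eq]
  have hville := (hindep.comp (fun i x => exp (ζ * x - c i)) (fun i => by fun_prop))
    |>.mul_measure_exists_le_prod_le_one (fun i => by fun_prop) (fun i ω => (exp_pos _).le)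
      (fun i => integrable_exp_mul_sub_of_map_eq_gaussianReal (hdist i) ζ)
      (fun i => integral_exp_mul_sub_of_map_eq_gaussianReal (hdist i) ζ) (exp K).toNNReal
  have hevent : {ω | ∃ n : ℕ, 1 ≤ n ∧ 0 ≤ ζ * ((∑ i ∈ range n, X i ω) - m * θ) - V ζ n + V ζ m}
      ⊆ {ω | ∃ n, exp K ≤ ∏ i ∈ range (n + 1), exp (ζ * X i ω - c i)} := by
    rintro ω ⟨_, hn, hω⟩
    obtain ⟨n, rfl⟩ := Nat.exists_eq_add_of_le' hn
    refine ⟨n, ?_⟩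
    rw [← exp_sum, exp_le_exp, sum_sub_distrib, ← mul_sum, ← hV_sum]
    linarith
  calc _ ≤ _ := measure_mono hevent
    _ ≤ (ENNReal.ofReal (exp K))⁻¹ := by
      rw [ENNReal.le_inv_iff_mul_le, mul_comm]
      simpa [ENNReal.ofReal, Real.coe_toNNReal _ (exp_pos K).le] using hville
    _ = _ := by
      rw [← ENNReal.ofReal_inv_of_pos (exp_pos K), ← exp_neg, ← exp_nat_mul, hK]
      congr 2
      ring

/-- Uniform inequality for sums of independent Gaussian random variables with means `μᵢ`
and variances `νᵢ > 0`: with `μ̄ₙ, ν̄ₙ` the averaged means and variances,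
`𝒱(s,n) = n (μ̄ₙ s + ν̄ₙ s²/2)` and `ζ = (θ - μ̄ₘ)/ν̄ₘ`, we have
`Pr{∃ n ≥ 1, ζ(Sₙ - mθ) - 𝒱(ζ,n) + 𝒱(ζ,m) ≥ 0} ≤ (exp (-(θ-μ̄ₘ)²/(2ν̄ₘ)))^m`. -/
theorem statement11 {Ω : Type*} [MeasurableSpace Ω] (P : Measure Ω) [IsProbabilityMeasure P]
    (X : ℕ → Ω → ℝ) (hXm : ∀ i, Measurable (X i))
    (hindep : iIndepFun X P)
    (μ : ℕ → ℝ) (v : ℕ → NNReal) (hv : ∀ i, 0 < v i)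
    (hdist : ∀ i, Measure.map (X i) P = gaussianReal (μ i) (v i))
    (μbar : ℕ → ℝ) (hμbar : ∀ n, μbar n = (∑ i ∈ Finset.range n, μ i) / n)
    (νbar : ℕ → ℝ) (hνbar : ∀ n, νbar n = (∑ i ∈ Finset.range n, (v i : ℝ)) / n)
    (V : ℝ → ℕ → ℝ)
    (hV : ∀ s n, V s n = n * (μbar n * s + νbar n * s ^ 2 / 2))
    (m : ℕ) (hm : 1 ≤ m) (θ : ℝ)
    (ζ : ℝ) (hζ : ζ = (θ - μbar m) / νbar m) :
    P {ω | ∃ n : ℕ, 1 ≤ n ∧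
        0 ≤ ζ * ((∑ i ∈ Finset.range n, X i ω) - m * θ) - V ζ n + V ζ m}
      ≤ ENNReal.ofReal ((Real.exp (-(θ - μbar m) ^ 2 / (2 * νbar m))) ^ m) :=
  statement11_general P X hXm hindep μ v hdist μbar hμbar νbar hνbar V hV m θ ζ hζ
end
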